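/- arXiv:2002.02218 — 5 statements merged into one kernel-verified Lean document; each statement's English description precedes it below -/
import Mathlib

section
/- If 1 ≤ i < j ≤ n and λ_i = λ_j, then ⟨E^{(0)}_{ij}, E^{(0)}_{ji}⟩ = (1/N)·(q_1 + ⋯ + q_{λ_i}) = (1/N)·(λ_1 + ⋯ + λ_{i−1} + (n − i + 1)·λ_i). -/
/-!
Since `E^{(0)}_{ij}` and `E^{(0)}_{ji}` already lie in `𝔤₀`, the form is `1/(2N)` times the
trace of `Z ↦ [A, [B, Z]]` on `𝔤₀`, the span of the `e_{ac}` with `col a = col c`. The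
`e_{ac}`-coefficient of `[A, [B, e_{ac}]]` is `(AB)_{aa} + (BA)_{cc} - A_{aa} B_{cc} - B_{aa} A_{cc}`.
Here `A` and `B` have zero diagonal, while `λ_i = λ_j` makes `(AB)_{aa}` and `(BA)_{cc}` the
indicators of `row a = i` and `row c = j`. So the trace counts pairs of boxes sharing a column
whose first box lies in row `i`, plus those whose second box lies in row `j`; each count is
`∑_k min(λ_i, λ_k) = q_1 + ⋯ + q_{λ_i}`, and monotonicity of `λ` evaluates the sum of minima.
-/

open Matrix Finset

theorem LinearMap.trace_eq_trace_subtype_comp_comp {K M : Type*} [Field K] [AddCommGroup M]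
    [Module K M] [FiniteDimensional K M] (W : Submodule K M) (p : M →ₗ[K] W)
    (hp : Function.LeftInverse p W.subtype) (f : Module.End K W) :
    trace K W f = trace K M (W.subtype ∘ₗ f ∘ₗ p) := by
  rw [trace_comp_comm', comp_assoc, show p ∘ₗ W.subtype = id from ext hp, comp_id]

theorem Matrix.stdBasis_repr_apply {R m n : Type*} [Semiring R] [Fintype m] [Fintype n]
    (M : Matrix m n R) (p : m × n) : (stdBasis R m n).repr M p = M p.1 p.2 := by
  simp [stdBasis]

theorem LinearMap.trace_matrix_eq_sum_single_apply {R β : Type*} [CommRing R] [Fintype β]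
    [DecidableEq β] (F : Module.End R (Matrix β β R)) :
    trace R (Matrix β β R) F = ∑ a, ∑ c, F (Matrix.single a c 1) a c := by
  rw [trace_eq_matrix_trace R (stdBasis R β β), Matrix.trace, Fintype.sum_prod_type]
  simp only [diag_apply, toMatrix_apply, stdBasis_eq_single, stdBasis_repr_apply]

namespace Matrix

theorem sum_sum_ite_single {β R : Type*} [Fintype β] [DecidableEq β] [Semiring R]
    (p : β → β → Prop) [DecidableRel p] :
    (∑ a, ∑ b, if p a b then single a b (1 : R) else 0) = of fun a b => if p a b then 1 else 0 := by
  conv_rhs => rw [matrix_eq_sum_single (of _)]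
  exact sum_congr rfl fun a _ => sum_congr rfl fun b _ => by split_ifs <;> simp [*]

theorem commutator_commutator_single_apply {β R : Type*} [Fintype β] [DecidableEq β]
    [CommRing R] (A B : Matrix β β R) (a c : β) :
    (A * (B * single a c 1 - single a c 1 * B) - (B * single a c 1 - single a c 1 * B) * A :
      Matrix β β R) a c = (A * B) a a + (B * A) c c - A a a * B c c - B a a * A c c := by
  simp only [Matrix.mul_sub, Matrix.sub_mul, sub_apply, ← Matrix.mul_assoc,
    mul_single_apply_same, mul_one]
  simp [mul_apply, single_apply, ite_and]
  ring

variable {β κ R : Type*} [CommSemiring R] [DecidableEq κ] (col : β → κ)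

variable (R) in
def blockProj : Matrix β β R →ₗ[R] Matrix β β R where
  toFun X := of fun a b => if col a = col b then X a b else 0
  map_add' X Y := by ext a b; simp only [of_apply, add_apply]; split_ifs <;> simp
  map_smul' r X := by ext a b; simp only [of_apply, smul_apply]; split_ifs <;> simp

@[simp]
theorem blockProj_apply (X : Matrix β β R) (a b : β) :
    blockProj R col X a b = if col a = col b then X a b else 0 := rfl

variable [DecidableEq β]

variable (R) in
def blockSubmodule : Submodule R (Matrix β β R) :=
  Submodule.span R {M | ∃ a b : β, col a = col b ∧ M = single a b 1}

theorem blockProj_single (a c : β) (r : R) :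
    blockProj R col (single a c r) = if col a = col c then single a c r else 0 := by
  ext x y
  by_cases h : col a = col c
  · simp only [h, if_true, blockProj_apply, single_apply]
    grind
  · simp only [h, if_false, blockProj_apply, single_apply, zero_apply]
    grind

theorem blockProj_eq_self {M : Matrix β β R} (hM : M ∈ blockSubmodule R col) :
    blockProj R col M = M := by
  induction hM using Submodule.span_induction with
  | mem M hM =>
    obtain ⟨a, b, hab, rfl⟩ := hM
    rw [blockProj_single, if_pos hab]
  | zero => exact map_zero _
  | add X Y _ _ hX hY => rw [map_add, hX, hY]
  | smul r X _ hX => rw [map_smul, hX]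

variable [Fintype β]

theorem blockProj_mem (X : Matrix β β R) : blockProj R col X ∈ blockSubmodule R col := by
  rw [matrix_eq_sum_single X]
  simp only [map_sum]
  refine Submodule.sum_mem _ fun a _ => Submodule.sum_mem _ fun b _ => ?_
  rw [← mul_one (X a b), ← smul_eq_mul, ← smul_single, map_smul, blockProj_single]
  split_ifs with h
  · exact Submodule.smul_mem _ _ (Submodule.subset_span ⟨a, b, h, rfl⟩)
  · simp

theorem trace_ad_comp_ad_blockSubmodule {K : Type*} [Field K] (A B : Matrix β β K)
    (adA adB : Module.End K (blockSubmodule K col))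
    (hA : ∀ Z, (adA Z : Matrix β β K) = A * Z - Z * A)
    (hB : ∀ Z, (adB Z : Matrix β β K) = B * Z - Z * B) :
    LinearMap.trace K _ (adA ∘ₗ adB) = ∑ a, ∑ c,
      if col a = col c then (A * B) a a + (B * A) c c - A a a * B c c - B a a * A c c else 0 := by
  rw [LinearMap.trace_eq_trace_subtype_comp_comp _
      ((blockProj K col).codRestrict _ (blockProj_mem col))
      (fun Z => Subtype.ext (blockProj_eq_self col Z.2)),
    LinearMap.trace_matrix_eq_sum_single_apply]
  refine sum_congr rfl fun a _ => sum_congr rfl fun c _ => ?_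
  simp only [LinearMap.comp_apply, Submodule.subtype_apply, hA, hB,
    LinearMap.codRestrict_apply, blockProj_single]
  split_ifs
  · exact commutator_commutator_single_apply A B a c
  · simp

end Matrix

theorem injective_of_lt_iff_lex {α ι : Type*} [LinearOrder α] [Preorder ι] {row : α → ι}
    {col : α → ℕ} (h : ∀ a b, a < b ↔ row a < row b ∨ (row a = row b ∧ col a < col b)) :
    Function.Injective fun a => (row a, col a) :=
  StrictMono.injective (f := fun a => toLex (row a, col a)) fun a b hab =>
    Prod.Lex.lt_iff.2 ((h a b).1 hab)

theorem sum_Icc_card_le_eq_sum_min {ι : Type*} [Fintype ι] (lam : ι → ℕ) (m : ℕ) :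
    ∑ c ∈ Icc 1 m, #{k | c ≤ lam k} = ∑ k, min m (lam k) := by
  simp only [card_filter]
  rw [sum_comm]
  refine sum_congr rfl fun k _ => ?_
  rw [← card_filter, show {c ∈ Icc 1 m | c ≤ lam k} = Icc 1 (min m (lam k)) by ext; simp; omega,
    Nat.card_Icc, Nat.add_sub_cancel]

theorem sum_min_eq_of_monotone {n : ℕ} {lam : Fin n → ℕ} (hmono : Monotone lam) (i : Fin n) :
    ∑ k, min (lam i) (lam k) = ∑ k with k < i, lam k + (n - i) * lam i := by
  rw [← sum_filter_add_sum_filter_not univ (· < i)]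
  congr 1
  · exact sum_congr rfl fun k hk => min_eq_right (hmono (mem_filter.1 hk).2.le)
  · rw [sum_congr rfl fun k hk => min_eq_left (hmono (not_lt.1 (mem_filter.1 hk).2)),
      sum_const, smul_eq_mul]
    congr 1
    simp only [not_lt, filter_le_eq_Ici, Fin.card_Ici]

def pyramidE0 {ι β R : Type*} [DecidableEq ι] [Zero R] [One R] (row : β → ι) (col : β → ℕ)
    (k l : ι) : Matrix β β R :=
  of fun a b => if row a = k ∧ row b = l ∧ col b = col a then 1 else 0

theorem pyramidE0_apply_self {ι β R : Type*} [DecidableEq ι] [Zero R] [One R] {row : β → ι}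
    {col : β → ℕ} {k l : ι} (hkl : k ≠ l) (a : β) : pyramidE0 (R := R) row col k l a a = 0 := by
  simp only [pyramidE0, of_apply]
  grind

section Pyramid

variable {ι β : Type*} [Fintype ι] [Fintype β] {lam : ι → ℕ} {row : β → ι}
  {col : β → ℕ} (hcol : ∀ a, col a < lam (row a))

include hcol in
theorem bijective_sigma_of_injective (hinj : Function.Injective fun a => (row a, col a))
    (hcard : Fintype.card β = ∑ k, lam k) :
    Function.Bijective fun a => (⟨row a, col a, hcol a⟩ : Σ k, Fin (lam k)) := by
  refine (Fintype.bijective_iff_injective_and_card _).2 ⟨?_, by simp [hcard]⟩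
  exact Function.Injective.of_comp (f := fun p : Σ k, Fin (lam k) => (p.1, (p.2 : ℕ))) hinj

variable {hcol} (hbij : Function.Bijective fun a => (⟨row a, col a, hcol a⟩ : Σ k, Fin (lam k)))
include hbij

theorem sum_eq_sum_sum_range {M : Type*} [AddCommMonoid M] (f : ι → ℕ → M) :
    ∑ a, f (row a) (col a) = ∑ k, ∑ t ∈ range (lam k), f k t := by
  rw [Fintype.sum_bijective _ hbij _ (fun p => f p.1 p.2) fun _ => rfl, Fintype.sum_sigma]
  exact sum_congr rfl fun k _ => Fin.sum_univ_eq_sum_range (f k) _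

variable [DecidableEq ι] {R : Type*} [Semiring R]

theorem sum_ite_row_eq {M : Type*} [AddCommMonoid M] (k : ι) (g : ℕ → M) :
    ∑ a, (if row a = k then g (col a) else 0) = ∑ t ∈ range (lam k), g t := by
  rw [sum_eq_sum_sum_range hbij fun k' t => if k' = k then g t else 0]
  simp

theorem sum_ite_row_col_eq (k : ι) (t : ℕ) :
    ∑ a, (if row a = k ∧ col a = t then (1 : R) else 0) = if t < lam k then 1 else 0 := by
  simp only [ite_and]
  rw [sum_ite_row_eq hbij k fun s => if s = t then (1 : R) else 0]
  simp

theorem sum_sum_ite_row_col_eq (k : ι) :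
    ∑ a, ∑ c, (if row a = k ∧ col a = col c then (1 : R) else 0)
      = ∑ k', ((min (lam k) (lam k') : ℕ) : R) := by
  rw [sum_comm]
  simp only [sum_ite_row_col_eq hbij]
  rw [sum_eq_sum_sum_range hbij fun _ t => if t < lam k then (1 : R) else 0]
  refine sum_congr rfl fun k' _ => ?_
  rw [sum_boole, show {t ∈ range (lam k') | t < lam k} = range (min (lam k) (lam k')) by
    ext; simp; omega, card_range]

theorem sum_sum_ite_col_eq_two_mul_sum_min {i j : ι} (hlam : lam i = lam j) :
    ∑ a, ∑ c, (if col a = col c then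
        (if row a = i then (1 : R) else 0) + (if row c = j then 1 else 0) else 0)
      = 2 * ∑ k, ((min (lam i) (lam k) : ℕ) : R) := by
  have hsplit : ∀ a c, (if col a = col c then
      (if row a = i then (1 : R) else 0) + (if row c = j then 1 else 0) else 0)
      = (if row a = i ∧ col a = col c then 1 else 0)
        + (if row c = j ∧ col c = col a then 1 else 0) := by
    intro a c
    by_cases h : col a = col c <;> simp [h, eq_comm]
  simp only [hsplit, sum_add_distrib]
  rw [sum_sum_ite_row_col_eq hbij i, sum_comm, sum_sum_ite_row_col_eq hbij j, ← hlam, two_mul]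

theorem pyramidE0_mul_pyramidE0_apply_self {k l : ι} (hkl : lam k ≤ lam l) (a : β) :
    (pyramidE0 row col k l * pyramidE0 row col l k : Matrix β β R) a a
      = if row a = k then 1 else 0 := by
  have hterm : ∀ b, pyramidE0 (R := R) row col k l a b * pyramidE0 row col l k b a
      = if row a = k then (if row b = l ∧ col b = col a then 1 else 0) else 0 := by
    intro b
    simp only [pyramidE0, of_apply]
    split_ifs <;> grind
  rw [mul_apply]
  simp_rw [hterm]
  split_ifs with h
  · rw [sum_ite_row_col_eq hbij, if_pos ((h ▸ hcol a).trans_le hkl)]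
  · simp

end Pyramid

theorem form_value_Eij_Eji_general
    (n N : ℕ)
    (lam : Fin n → ℕ) (hmono : Monotone lam)
    (hsum : ∑ i, lam i = N)
    (row : Fin N → Fin n) (col : Fin N → ℕ)
    (hcol : ∀ a, col a < lam (row a))
    (horder : ∀ a b : Fin N, a < b ↔ (row a < row b ∨ (row a = row b ∧ col a < col b)))
    (E : Fin n → Fin n → ℕ → Matrix (Fin N) (Fin N) ℂ)
    (hE : ∀ i j r, E i j r = ∑ a : Fin N, ∑ b : Fin N,
      if row a = i ∧ row b = j ∧ col b = col a + r then Matrix.single a b 1 else 0)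
    (g0 : Submodule ℂ (Matrix (Fin N) (Fin N) ℂ))
    (hg0 : g0 = Submodule.span ℂ
      {M | ∃ a b : Fin N, col a = col b ∧ M = Matrix.single a b 1})
    (q : ℕ → ℕ) (hq : ∀ c, q c = (Finset.univ.filter fun k : Fin n => c ≤ lam k).card)
    (pi0 : Matrix (Fin N) (Fin N) ℂ → Matrix (Fin N) (Fin N) ℂ)
    (hpi0 : ∀ (X : Matrix (Fin N) (Fin N) ℂ) (a b : Fin N),
      pi0 X a b = if col a = col b then X a b else 0)
    (i j : Fin n) (hij : i < j) (hlam : lam i = lam j)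
    (adX adY : Module.End ℂ ↥g0)
    (hadX : ∀ Z : ↥g0, ((adX Z : Matrix (Fin N) (Fin N) ℂ))
        = pi0 (E i j 0) * (Z : Matrix (Fin N) (Fin N) ℂ)
          - (Z : Matrix (Fin N) (Fin N) ℂ) * pi0 (E i j 0))
    (hadY : ∀ Z : ↥g0, ((adY Z : Matrix (Fin N) (Fin N) ℂ))
        = pi0 (E j i 0) * (Z : Matrix (Fin N) (Fin N) ℂ)
          - (Z : Matrix (Fin N) (Fin N) ℂ) * pi0 (E j i 0)) :
    (1 / (2 * (N : ℂ))) * LinearMap.trace ℂ ↥g0 (adX ∘ₗ adY)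
        = (1 / (N : ℂ)) * ∑ c ∈ Finset.Icc 1 (lam i), (q c : ℂ) ∧
    (1 / (N : ℂ)) * (∑ c ∈ Finset.Icc 1 (lam i), (q c : ℂ))
        = (1 / (N : ℂ)) * ((∑ k ∈ Finset.univ.filter (fun k : Fin n => k < i), (lam k : ℂ))
            + ((n - (i : ℕ) : ℕ) : ℂ) * (lam i : ℂ)) := by
  classical
  obtain rfl : g0 = blockSubmodule ℂ col := hg0
  have hbij := bijective_sigma_of_injective hcol (injective_of_lt_iff_lex horder) (by simp [hsum])
  have hE0 : ∀ k l, pi0 (E k l 0) = pyramidE0 row col k l := fun k l => by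
    ext a b
    simp only [hpi0, hE, add_zero, sum_sum_ite_single, pyramidE0, of_apply]
    grind
  have hS : ∑ c ∈ Icc 1 (lam i), (q c : ℂ) = ∑ k, ((min (lam i) (lam k) : ℕ) : ℂ) := by
    simp only [hq]
    exact_mod_cast sum_Icc_card_le_eq_sum_min lam (lam i)
  rw [hE0] at hadX hadY
  have htrace : LinearMap.trace ℂ _ (adX ∘ₗ adY) = 2 * ∑ c ∈ Icc 1 (lam i), (q c : ℂ) := by
    rw [trace_ad_comp_ad_blockSubmodule col _ _ adX adY hadX hadY, hS]
    simp only [pyramidE0_apply_self hij.ne, pyramidE0_apply_self hij.ne', zero_mul, sub_zero,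
      pyramidE0_mul_pyramidE0_apply_self hbij hlam.le,
      pyramidE0_mul_pyramidE0_apply_self hbij hlam.ge]
    exact sum_sum_ite_col_eq_two_mul_sum_min hbij hlam
  constructor
  · rw [htrace]
    ring
  · rw [hS]
    exact_mod_cast congrArg (fun x : ℕ => (1 / (N : ℂ)) * x) (sum_min_eq_of_monotone hmono i)

/-- if `1 ≤ i < j ≤ n` and `λ_i = λ_j`, then
`⟨E^{(0)}_{ij}, E^{(0)}_{ji}⟩ = (1/N)·(q_1 + ⋯ + q_{λ_i})
 = (1/N)·(λ_1 + ⋯ + λ_{i−1} + (n−i+1)λ_i)`,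
where `⟨X,Y⟩ = (1/(2N))·tr(ad(π₀X) ∘ ad(π₀Y))` with `ad` the adjoint action of `𝔤_0`
on itself and `π₀` the projection onto `𝔤_0` killing `e_{ab}` with `col(a) ≠ col(b)`.
(Rows `i : Fin n` are indexed from `0`, so `n − i_paper + 1 = n − i` here.) -/
theorem form_value_Eij_Eji
    (n N : ℕ) (hn : 0 < n)
    (lam : Fin n → ℕ) (hpos : ∀ i, 0 < lam i) (hmono : Monotone lam)
    (hsum : ∑ i, lam i = N)
    (row : Fin N → Fin n) (col : Fin N → ℕ)
    (hcol : ∀ a, col a < lam (row a))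
    (horder : ∀ a b : Fin N, a < b ↔ (row a < row b ∨ (row a = row b ∧ col a < col b)))
    (E : Fin n → Fin n → ℕ → Matrix (Fin N) (Fin N) ℂ)
    (hE : ∀ i j r, E i j r = ∑ a : Fin N, ∑ b : Fin N,
      if row a = i ∧ row b = j ∧ col b = col a + r then Matrix.single a b 1 else 0)
    (g0 : Submodule ℂ (Matrix (Fin N) (Fin N) ℂ))
    (hg0 : g0 = Submodule.span ℂ
      {M | ∃ a b : Fin N, col a = col b ∧ M = Matrix.single a b 1})
    (q : ℕ → ℕ) (hq : ∀ c, q c = (Finset.univ.filter fun k : Fin n => c ≤ lam k).card)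
    (pi0 : Matrix (Fin N) (Fin N) ℂ → Matrix (Fin N) (Fin N) ℂ)
    (hpi0 : ∀ (X : Matrix (Fin N) (Fin N) ℂ) (a b : Fin N),
      pi0 X a b = if col a = col b then X a b else 0)
    (i j : Fin n) (hij : i < j) (hlam : lam i = lam j)
    (adX adY : Module.End ℂ ↥g0)
    (hadX : ∀ Z : ↥g0, ((adX Z : Matrix (Fin N) (Fin N) ℂ))
        = pi0 (E i j 0) * (Z : Matrix (Fin N) (Fin N) ℂ)
          - (Z : Matrix (Fin N) (Fin N) ℂ) * pi0 (E i j 0))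
    (hadY : ∀ Z : ↥g0, ((adY Z : Matrix (Fin N) (Fin N) ℂ))
        = pi0 (E j i 0) * (Z : Matrix (Fin N) (Fin N) ℂ)
          - (Z : Matrix (Fin N) (Fin N) ℂ) * pi0 (E j i 0)) :
    (1 / (2 * (N : ℂ))) * LinearMap.trace ℂ ↥g0 (adX ∘ₗ adY)
        = (1 / (N : ℂ)) * ∑ c ∈ Finset.Icc 1 (lam i), (q c : ℂ) ∧
    (1 / (N : ℂ)) * (∑ c ∈ Finset.Icc 1 (lam i), (q c : ℂ))
        = (1 / (N : ℂ)) * ((∑ k ∈ Finset.univ.filter (fun k : Fin n => k < i), (lam k : ℂ))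
            + ((n - (i : ℕ) : ℕ) : ℂ) * (lam i : ℂ)) :=
  form_value_Eij_Eji_general n N lam hmono hsum row col hcol horder E hE g0 hg0 q hq pi0 hpi0 i j
    hij hlam adX adY hadX hadY
end

section
/- For all 1 ≤ i, j ≤ n, ⟨E^{(0)}_{ii}, E^{(0)}_{jj}⟩ = (1/N)·( δ_{ij}·(λ_1 + ⋯ + λ_{i−1} + (n − i + 1)·λ_i) − min(λ_i, λ_j) ). -/
open Matrix Finset

/-!
`π₀ E^{(0)}_{kk}` is the diagonal idempotent of row `k`, so on the basis of matrix units `e_{ab}`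
(`col a = col b`) of `𝔤₀` both `ad` operators act diagonally, and the trace is the sum of
`(δ_{row a,i} − δ_{row b,i})(δ_{row a,j} − δ_{row b,j})` over pairs of boxes in a common column.
Rows `k` and `l` share `min(λ_k, λ_l)` columns, so the trace is
`∑_{k,l} min(λ_k, λ_l)(δ_{ki} − δ_{li})(δ_{kj} − δ_{lj})
  = 2(δ_{ij} ∑_l min(λ_i, λ_l) − min(λ_i, λ_j))`,
and as `λ` is increasing, `∑_l min(λ_i, λ_l) = λ_1 + ⋯ + λ_{i−1} + (n − i + 1)λ_i`.
-/

lemma LinearMap.trace_eq_sum_of_apply_basis_eq_smul {R M ι : Type*} [CommRing R]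
    [AddCommGroup M] [Module R M] [Fintype ι] [DecidableEq ι] (B : Module.Basis ι R M)
    (f : M →ₗ[R] M) (μ : ι → R) (h : ∀ p, f (B p) = μ p • B p) :
    LinearMap.trace R M f = ∑ p, μ p := by
  rw [LinearMap.trace_eq_matrix_trace R B f, Matrix.trace]
  refine sum_congr rfl fun p _ => ?_
  rw [Matrix.diag, LinearMap.toMatrix_apply, h p, map_smul]
  simp

namespace Matrix

section Semiring

variable {R m n : Type*} [Semiring R] [Fintype m] [Fintype n] [DecidableEq m] [DecidableEq n]

lemma sum_sum_ite_single_one (P : m → n → Prop) [∀ a b, Decidable (P a b)] :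
    (∑ a, ∑ b, if P a b then single a b (1 : R) else 0) = of fun a b => if P a b then 1 else 0 := by
  conv_rhs => rw [matrix_eq_sum_single (of fun a b => if P a b then (1 : R) else 0)]
  refine sum_congr rfl fun a _ => sum_congr rfl fun b _ => ?_
  split_ifs <;> simp [*]

variable (R) in
noncomputable def singleSpanBasis (P : m → n → Prop) :
    Module.Basis {q : m × n // P q.1 q.2} R
      (Submodule.span R {M | ∃ a b, P a b ∧ M = single a b (1 : R)}) :=
  (Module.Basis.span ((stdBasis R m n).linearIndependent.comp _ Subtype.val_injective)).map
    (LinearEquiv.ofEq _ _ (congrArg (Submodule.span R) (by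
      ext M
      simp [stdBasis_eq_single, eq_comm])))

@[simp]
lemma coe_singleSpanBasis (P : m → n → Prop) (q : {q : m × n // P q.1 q.2}) :
    (singleSpanBasis R P q : Matrix m n R) = single q.1.1 q.1.2 1 := by
  simp only [singleSpanBasis, Module.Basis.map_apply, LinearEquiv.coe_ofEq_apply,
    Module.Basis.span_apply, Function.comp_apply]
  exact stdBasis_eq_single R q.1.1 q.1.2

end Semiring

section CommRing

variable {R m : Type*} [CommRing R] [Fintype m] [DecidableEq m]

lemma diagonal_mul_single_sub_single_mul_diagonal (d : m → R) (a b : m) :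
    diagonal d * single a b 1 - single a b 1 * diagonal d = (d a - d b) • single a b (1 : R) := by
  ext x y
  simp only [sub_apply, diagonal_mul, mul_diagonal, smul_apply, single_apply, smul_eq_mul]
  split_ifs with h
  · obtain ⟨rfl, rfl⟩ := h
    ring
  · ring

lemma apply_singleSpanBasis_of_eq_commutator_diagonal (P : m → m → Prop) (e : m → R)
    (h : Module.End R (Submodule.span R {M | ∃ a b, P a b ∧ M = single a b (1 : R)}))
    (he : ∀ Z, (h Z : Matrix m m R) = diagonal e * Z - Z * diagonal e)
    (q : {q : m × m // P q.1 q.2}) :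
    h (singleSpanBasis R P q) = (e q.1.1 - e q.1.2) • singleSpanBasis R P q := by
  ext1
  rw [he, Submodule.coe_smul, coe_singleSpanBasis, diagonal_mul_single_sub_single_mul_diagonal]

lemma trace_comp_of_eq_commutator_diagonal (P : m → m → Prop) [∀ a b, Decidable (P a b)]
    {V : Submodule R (Matrix m m R)}
    (hV : V = Submodule.span R {M | ∃ a b, P a b ∧ M = single a b 1})
    (d d' : m → R) (f g : Module.End R V)
    (hf : ∀ Z : V, (f Z : Matrix m m R) = diagonal d * Z - Z * diagonal d)
    (hg : ∀ Z : V, (g Z : Matrix m m R) = diagonal d' * Z - Z * diagonal d') :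
    LinearMap.trace R V (f ∘ₗ g) = ∑ a, ∑ b, if P a b then (d a - d b) * (d' a - d' b) else 0 := by
  subst hV
  rw [LinearMap.trace_eq_sum_of_apply_basis_eq_smul (singleSpanBasis R P) _
    (fun q => (d q.1.1 - d q.1.2) * (d' q.1.1 - d' q.1.2)) fun q => by
      rw [LinearMap.comp_apply, apply_singleSpanBasis_of_eq_commutator_diagonal P d' g hg,
        map_smul, apply_singleSpanBasis_of_eq_commutator_diagonal P d f hf, smul_smul, mul_comm],
    ← sum_subtype (univ.filter fun q : m × m => P q.1 q.2) (by simp)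
      fun q => (d q.1 - d q.2) * (d' q.1 - d' q.2), sum_filter, Fintype.sum_prod_type]

end CommRing

end Matrix

lemma sum_sum_mul_delta_sub_mul_delta_sub {R ι : Type*} [CommRing R] [Fintype ι] [DecidableEq ι]
    (m : ι → ι → R) (hm : ∀ k l, m k l = m l k) (i j : ι) :
    ∑ k, ∑ l, m k l * (((if k = i then 1 else 0) - (if l = i then 1 else 0)) *
      ((if k = j then 1 else 0) - (if l = j then 1 else 0)))
      = 2 * ((if i = j then ∑ l, m i l else 0) - m i j) := by
  simp only [mul_sub, mul_ite, mul_one, mul_zero, sum_sub_distrib]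
  simp only [sum_ite_irrel, sum_sub_distrib, sum_const_zero, sum_ite_eq', mem_univ, if_true]
  obtain rfl | hij := eq_or_ne i j
  · simp only [if_true, hm _ i]
    ring
  · simp only [hij, hij.symm, if_false, hm j i]
    ring

lemma sum_min_of_monotone {n : ℕ} {lam : Fin n → ℕ} (hmono : Monotone lam) (i : Fin n) :
    ∑ l, min (lam i) (lam l) = ∑ k ∈ univ.filter (· < i), lam k + (n - i) * lam i := by
  rw [← sum_filter_add_sum_filter_not univ (· < i)]
  congr 1
  · exact sum_congr rfl fun l hl => min_eq_right (hmono (mem_filter.1 hl).2.le)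
  · have hIci : univ.filter (fun l => ¬ l < i) = Ici i := by ext; simp
    rw [sum_congr rfl fun l hl => min_eq_left (hmono (not_lt.1 (mem_filter.1 hl).2)), sum_const,
      smul_eq_mul, hIci, Fin.card_Ici]

section Pyramid

variable {n N : ℕ} {lam : Fin n → ℕ} {row : Fin N → Fin n} {col : Fin N → ℕ}

lemma injective_row_col
    (horder : ∀ a b : Fin N, a < b → row a < row b ∨ (row a = row b ∧ col a < col b)) :
    Function.Injective fun a => (row a, col a) := by
  have hlex : StrictMono fun a => toLex (row a, col a) :=
    fun a b h => Prod.Lex.toLex_lt_toLex.2 (horder a b h)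
  exact fun a b h => hlex.injective (congrArg toLex h)

lemma sum_eq_sum_boxes {M : Type*} [AddCommMonoid M]
    (hinj : Function.Injective fun a => (row a, col a)) (hcol : ∀ a, col a < lam (row a))
    (hsum : ∑ k, lam k = N) (F : Fin n → ℕ → M) :
    ∑ a, F (row a) (col a) = ∑ k, ∑ c ∈ range (lam k), F k c := by
  let box : Fin N → Σ k, Fin (lam k) := fun a => ⟨row a, col a, hcol a⟩
  have hbox : Function.Bijective box := by
    refine (Fintype.bijective_iff_injective_and_card box).2 ⟨fun a b h => hinj ?_, by simp [hsum]⟩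
    obtain ⟨hr, hc⟩ := Sigma.mk.inj_iff.1 h
    exact Prod.ext hr ((Fin.heq_ext_iff (congrArg lam hr)).1 hc)
  rw [Fintype.sum_bijective box hbox (fun a => F (row a) (col a)) (fun x => F x.1 x.2) fun _ => rfl,
    Fintype.sum_sigma]
  simp_rw [Fin.sum_univ_eq_sum_range (F _)]

lemma sum_sum_ite_col_eq {R : Type*} [CommSemiring R]
    (hinj : Function.Injective fun a => (row a, col a)) (hcol : ∀ a, col a < lam (row a))
    (hsum : ∑ k, lam k = N) (f : Fin n → Fin n → R) :
    ∑ a, ∑ b, (if col a = col b then f (row a) (row b) else 0)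
      = ∑ k, ∑ l, ((min (lam k) (lam l) : ℕ) : R) * f k l := by
  have common_columns : ∀ k l, ∑ c ∈ range (lam k), ∑ c' ∈ range (lam l),
      (if c = c' then f k l else 0) = ((min (lam k) (lam l) : ℕ) : R) * f k l := by
    intro k l
    rw [sum_congr rfl fun c _ => sum_ite_eq _ c _, sum_ite_mem, sum_const, range_inter_range,
      card_range, nsmul_eq_mul]
  calc ∑ a, ∑ b, (if col a = col b then f (row a) (row b) else 0)
      = ∑ a, ∑ l, ∑ c' ∈ range (lam l), if col a = c' then f (row a) l else 0 :=
        sum_congr rfl fun a _ => sum_eq_sum_boxes hinj hcol hsum fun l c' =>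
          if col a = c' then f (row a) l else 0
    _ = ∑ k, ∑ c ∈ range (lam k), ∑ l, ∑ c' ∈ range (lam l), if c = c' then f k l else 0 :=
        sum_eq_sum_boxes hinj hcol hsum fun k c =>
          ∑ l, ∑ c' ∈ range (lam l), if c = c' then f k l else 0
    _ = ∑ k, ∑ l, ((min (lam k) (lam l) : ℕ) : R) * f k l :=
        sum_congr rfl fun k _ => by rw [sum_comm]; exact sum_congr rfl fun l _ => common_columns k l

lemma proj_sum_single_row_eq_diagonal {R : Type*} [Semiring R]
    (hinj : Function.Injective fun a => (row a, col a)) {k : Fin n}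
    {pi0 : Matrix (Fin N) (Fin N) R → Matrix (Fin N) (Fin N) R}
    (hpi0 : ∀ X a b, pi0 X a b = if col a = col b then X a b else 0) :
    pi0 (∑ a, ∑ b, if row a = k ∧ row b = k ∧ col b = col a + 0 then single a b 1 else 0)
      = diagonal fun a => if row a = k then 1 else 0 := by
  ext x y
  rw [hpi0, sum_sum_ite_single_one, of_apply, diagonal_apply]
  by_cases hxy : x = y
  · subst hxy
    simp
  · have : ¬ (row x = k ∧ row y = k ∧ col y = col x + 0) := fun h =>
      hxy (hinj (Prod.ext (h.1.trans h.2.1.symm) h.2.2.symm))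
    rw [if_neg this, if_neg hxy, ite_self]

end Pyramid

-- Rows are indexed from `0`, so the paper's `n − i + 1` is `n − i` here.
theorem form_value_Eii_Ejj_general
    (n N : ℕ)
    (lam : Fin n → ℕ) (hmono : Monotone lam)
    (hsum : ∑ i, lam i = N)
    (row : Fin N → Fin n) (col : Fin N → ℕ)
    (hcol : ∀ a, col a < lam (row a))
    (horder : ∀ a b : Fin N, a < b ↔ (row a < row b ∨ (row a = row b ∧ col a < col b)))
    (E : Fin n → Fin n → ℕ → Matrix (Fin N) (Fin N) ℂ)
    (hE : ∀ i j r, E i j r = ∑ a : Fin N, ∑ b : Fin N,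
      if row a = i ∧ row b = j ∧ col b = col a + r then Matrix.single a b 1 else 0)
    (g0 : Submodule ℂ (Matrix (Fin N) (Fin N) ℂ))
    (hg0 : g0 = Submodule.span ℂ
      {M | ∃ a b : Fin N, col a = col b ∧ M = Matrix.single a b 1})
    (pi0 : Matrix (Fin N) (Fin N) ℂ → Matrix (Fin N) (Fin N) ℂ)
    (hpi0 : ∀ (X : Matrix (Fin N) (Fin N) ℂ) (a b : Fin N),
      pi0 X a b = if col a = col b then X a b else 0)
    (i j : Fin n)
    (adX adY : Module.End ℂ ↥g0)
    (hadX : ∀ Z : ↥g0, ((adX Z : Matrix (Fin N) (Fin N) ℂ))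
        = pi0 (E i i 0) * (Z : Matrix (Fin N) (Fin N) ℂ)
          - (Z : Matrix (Fin N) (Fin N) ℂ) * pi0 (E i i 0))
    (hadY : ∀ Z : ↥g0, ((adY Z : Matrix (Fin N) (Fin N) ℂ))
        = pi0 (E j j 0) * (Z : Matrix (Fin N) (Fin N) ℂ)
          - (Z : Matrix (Fin N) (Fin N) ℂ) * pi0 (E j j 0)) :
    (1 / (2 * (N : ℂ))) * LinearMap.trace ℂ ↥g0 (adX ∘ₗ adY)
      = (1 / (N : ℂ)) *
          ((if i = j then
              ((∑ k ∈ Finset.univ.filter (fun k : Fin n => k < i), (lam k : ℂ))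
                + ((n - (i : ℕ) : ℕ) : ℂ) * (lam i : ℂ))
            else 0)
            - ((min (lam i) (lam j) : ℕ) : ℂ)) := by
  have hinj := injective_row_col fun a b => (horder a b).1
  have hdiag (k : Fin n) : pi0 (E k k 0) = diagonal fun a => if row a = k then 1 else 0 := by
    rw [hE]
    exact proj_sum_single_row_eq_diagonal hinj hpi0
  have hrow : ∑ l, ((min (lam i) (lam l) : ℕ) : ℂ)
      = ∑ k ∈ univ.filter (· < i), (lam k : ℂ) + ((n - i : ℕ) : ℂ) * lam i := by
    exact_mod_cast sum_min_of_monotone hmono i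
  rw [trace_comp_of_eq_commutator_diagonal (fun a b => col a = col b) hg0 _ _ adX adY
      (fun Z => by rw [hadX, hdiag]) (fun Z => by rw [hadY, hdiag]),
    sum_sum_ite_col_eq hinj hcol hsum fun k l =>
      ((if k = i then 1 else 0) - (if l = i then 1 else 0)) *
        ((if k = j then 1 else 0) - (if l = j then 1 else 0)),
    sum_sum_mul_delta_sub_mul_delta_sub _ (fun k l => by rw [min_comm]), hrow]
  ring

/-- for all `1 ≤ i,j ≤ n`,
`⟨E^{(0)}_{ii}, E^{(0)}_{jj}⟩ = (1/N)·(δ_{ij}(λ_1+⋯+λ_{i−1}+(n−i+1)λ_i) − min(λ_i,λ_j))`,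
where `⟨X,Y⟩ = (1/(2N))·tr(ad(π₀X) ∘ ad(π₀Y))` with `ad` the adjoint action of `𝔤_0`
on itself and `π₀` the projection onto `𝔤_0` killing `e_{ab}` with `col(a) ≠ col(b)`.
(Rows `i : Fin n` are indexed from `0`, so `n − i_paper + 1 = n − i` here.) -/
theorem form_value_Eii_Ejj
    (n N : ℕ) (hn : 0 < n)
    (lam : Fin n → ℕ) (hpos : ∀ i, 0 < lam i) (hmono : Monotone lam)
    (hsum : ∑ i, lam i = N)
    (row : Fin N → Fin n) (col : Fin N → ℕ)
    (hcol : ∀ a, col a < lam (row a))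
    (horder : ∀ a b : Fin N, a < b ↔ (row a < row b ∨ (row a = row b ∧ col a < col b)))
    (E : Fin n → Fin n → ℕ → Matrix (Fin N) (Fin N) ℂ)
    (hE : ∀ i j r, E i j r = ∑ a : Fin N, ∑ b : Fin N,
      if row a = i ∧ row b = j ∧ col b = col a + r then Matrix.single a b 1 else 0)
    (g0 : Submodule ℂ (Matrix (Fin N) (Fin N) ℂ))
    (hg0 : g0 = Submodule.span ℂ
      {M | ∃ a b : Fin N, col a = col b ∧ M = Matrix.single a b 1})
    (pi0 : Matrix (Fin N) (Fin N) ℂ → Matrix (Fin N) (Fin N) ℂ)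
    (hpi0 : ∀ (X : Matrix (Fin N) (Fin N) ℂ) (a b : Fin N),
      pi0 X a b = if col a = col b then X a b else 0)
    (i j : Fin n)
    (adX adY : Module.End ℂ ↥g0)
    (hadX : ∀ Z : ↥g0, ((adX Z : Matrix (Fin N) (Fin N) ℂ))
        = pi0 (E i i 0) * (Z : Matrix (Fin N) (Fin N) ℂ)
          - (Z : Matrix (Fin N) (Fin N) ℂ) * pi0 (E i i 0))
    (hadY : ∀ Z : ↥g0, ((adY Z : Matrix (Fin N) (Fin N) ℂ))
        = pi0 (E j j 0) * (Z : Matrix (Fin N) (Fin N) ℂ)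
          - (Z : Matrix (Fin N) (Fin N) ℂ) * pi0 (E j j 0)) :
    (1 / (2 * (N : ℂ))) * LinearMap.trace ℂ ↥g0 (adX ∘ₗ adY)
      = (1 / (N : ℂ)) *
          ((if i = j then
              ((∑ k ∈ Finset.univ.filter (fun k : Fin n => k < i), (lam k : ℂ))
                + ((n - (i : ℕ) : ℕ) : ℂ) * (lam i : ℂ))
            else 0)
            - ((min (lam i) (lam j) : ℕ) : ℂ)) :=
  form_value_Eii_Ejj_general n N lam hmono hsum row col hcol horder E hE g0 hg0 pi0 hpi0 i j adX adY
    hadX hadY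
end

section
/- Set 𝔫₋ = span{E^{(r)}_{ij} : i > j}, 𝔥 = span{E^{(r)}_{ii}} and 𝔫₊ = span{E^{(r)}_{ij} : i < j}, with r ranging over all admissible values. Then 𝔫₋, 𝔥 and 𝔫₊ are Lie subalgebras of the centralizer 𝔞, the subalgebra 𝔥 is abelian, and 𝔞 = 𝔫₋ ⊕ 𝔥 ⊕ 𝔫₊ as a direct sum of vector spaces. -/
/-!
Through the labelling, `Fin N` is the set of boxes `(i, c)`, `c < λ i`, and `e` is the sum of the
row shifts `E^{(1)}_{ii}`. The products `E^{(r)}_{ij} E^{(s)}_{jl} = E^{(r+s)}_{il}` (valid when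
`λ l ≤ λ j + s`, zero when the inner indices differ) show that admissible `E`'s commute with `e`
and that the spans of `𝔫₋`, `𝔥`, `𝔫₊` are even closed under multiplication, with `𝔥` commutative.
They live in the blocks strictly below, on and strictly above the block diagonal, so they meet
trivially. Conversely, if `X` commutes with `e`, the entries `x(p, q)` of its `(i, j)` block satisfy
`x(p+1, q+1) = x(p, q)` and `x(p+1, 0) = 0` and vanish outside the block. So the block is
`∑_r x(0, r) E^{(r)}_{ij}`, and shifting `x(0, r)` down the diagonal out of the block shows that
`x(0, r) = 0` unless `λ j ≤ λ i + r`, i.e. unless `r` is admissible.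
-/

open Matrix

section DiagonalInvariant

variable {M : Type*}

def IsDiagonalInvariant (l : ℕ) (g : ℕ → ℕ → M) : Prop :=
  ∀ p q, q + 1 < l → g (p + 1) (q + 1) = g p q

namespace IsDiagonalInvariant

variable {g : ℕ → ℕ → M} {l : ℕ} (hg : IsDiagonalInvariant l g)
include hg

theorem apply_add_add (k p q : ℕ) (h : q + k < l) : g (p + k) (q + k) = g p q := by
  induction k with
  | zero => rfl
  | succ k ih => rw [← add_assoc, ← add_assoc, hg _ _ (by omega), ih (by omega)]

theorem apply_eq_apply_zero_sub {p q : ℕ} (hpq : p ≤ q) (hq : q < l) : g p q = g 0 (q - p) := by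
  simpa [Nat.sub_add_cancel hpq] using hg.apply_add_add p 0 (q - p) (by omega)

theorem apply_eq_zero_of_lt [Zero M] (hzero : ∀ p, g (p + 1) 0 = 0)
    (hl : ∀ p q, l ≤ q → g p q = 0) {p q : ℕ} (hqp : q < p) : g p q = 0 := by
  rcases lt_or_ge q l with hq | hq
  · obtain ⟨d, rfl⟩ : ∃ d, p = q + d + 1 := ⟨p - q - 1, by omega⟩
    have h := hg.apply_add_add q (d + 1) 0 (by omega)
    rw [hzero] at h
    convert h using 2 <;> omega
  · exact hl p q hq

theorem apply_zero_eq_zero [Zero M] {m r : ℕ} (hm : ∀ q, g m q = 0) (h : m + r < l) :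
    g 0 r = 0 := by
  rw [← hg.apply_add_add m 0 r (by omega), zero_add, hm]

end IsDiagonalInvariant

end DiagonalInvariant

theorem Matrix.sum_sum_ite_single_one_s11 {ι R : Type*} [Fintype ι] [DecidableEq ι] [Semiring R]
    (p : ι → ι → Prop) [∀ a b, Decidable (p a b)] :
    ∑ a, ∑ b, (if p a b then single a b (1 : R) else 0) = of fun a b => if p a b then 1 else 0 := by
  refine (Finset.sum_congr rfl fun a _ => Finset.sum_congr rfl fun b _ => ?_).trans
    (matrix_eq_sum_single _).symm
  split_ifs with h <;> simp [h]

theorem Submodule.mul_comm_of_mem_span {R A : Type*} [CommSemiring R] [Semiring A] [Algebra R A]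
    {s : Set A}
    (hs : ∀ x ∈ s, ∀ y ∈ s, x * y = y * x) {x y : A} (hx : x ∈ Submodule.span R s)
    (hy : y ∈ Submodule.span R s) : x * y = y * x :=
  have h := Algebra.adjoin_le_centralizer_centralizer R s
  Set.centralizer_centralizer_comm_of_comm hs x (h (Algebra.span_le_adjoin R s hx))
    y (h (Algebra.span_le_adjoin R s hy))

namespace Pyramid

variable {ι κ : Type*}

structure IsBoxLabelling (lam : κ → ℕ) (row : ι → κ) (col : ι → ℕ) : Prop where
  col_lt : ∀ a, col a < lam (row a)
  injective : ∀ a b, row a = row b → col a = col b → a = b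
  exists_box : ∀ i c, c < lam i → ∃ a, row a = i ∧ col a = c

section BlockSupported

variable (R : Type*) [CommRing R] (row : ι → κ)

def blockSupported (ρ : κ → κ → Prop) : Submodule R (Matrix ι ι R) where
  carrier := {X | ∀ a b, ¬ρ (row a) (row b) → X a b = 0}
  add_mem' hX hY a b h := by simp [hX a b h, hY a b h]
  zero_mem' _ _ _ := rfl
  smul_mem' c X hX a b h := by simp [hX a b h]

variable {R row}

theorem blockSupported_mono {ρ σ : κ → κ → Prop} (h : ∀ i j, ρ i j → σ i j) :
    blockSupported R row ρ ≤ blockSupported R row σ :=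
  fun _ hX a b hab => hX a b fun h' => hab (h _ _ h')

theorem disjoint_blockSupported {ρ σ : κ → κ → Prop} (h : ∀ i j, ρ i j → ¬σ i j) :
    Disjoint (blockSupported R row ρ) (blockSupported R row σ) := by
  rw [Submodule.disjoint_def]
  intro X hρ hσ
  ext a b
  by_cases hab : ρ (row a) (row b)
  · exact hσ a b (h _ _ hab)
  · exact hρ a b hab

end BlockSupported

variable [DecidableEq κ] (R : Type*) [CommRing R] (row : ι → κ) (col : ι → ℕ)

def shiftMatrix (i j : κ) (r : ℕ) : Matrix ι ι R :=
  of fun a b => if row a = i ∧ row b = j ∧ col b = col a + r then 1 else 0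

def nilpotent : Matrix ι ι R :=
  of fun a b => if row a = row b ∧ col b = col a + 1 then 1 else 0

def boxIndicator (i : κ) (p : ℕ) : ι → R :=
  fun a => if row a = i ∧ col a = p then 1 else 0

def triangularPart (lam : κ → ℕ) (ρ : κ → κ → Prop) : Submodule R (Matrix ι ι R) :=
  Submodule.span R {M | ∃ i j r, ρ i j ∧ lam j - min (lam i) (lam j) ≤ r ∧ r < lam j ∧
    M = shiftMatrix R row col i j r}

variable {R row col} {lam : κ → ℕ}

theorem boxIndicator_of_le (hP : IsBoxLabelling lam row col) {i : κ} {p : ℕ} (h : lam i ≤ p) :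
    boxIndicator R row col i p = 0 := by
  funext a
  have := hP.col_lt a
  simp only [boxIndicator, Pi.zero_apply, ite_eq_right_iff, and_imp]
  rintro rfl rfl
  omega

theorem boxIndicator_row_col [DecidableEq ι] (hP : IsBoxLabelling lam row col) (a : ι) :
    boxIndicator R row col (row a) (col a) = Pi.single a 1 := by
  funext b
  by_cases hb : b = a
  · simp [boxIndicator, hb]
  · simp only [boxIndicator, Pi.single_apply, hb, if_false]
    exact if_neg fun h => hb (hP.injective b a h.1 h.2)

theorem shiftMatrix_eq_zero (hP : IsBoxLabelling lam row col) {i j : κ} {r : ℕ}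
    (h : lam j ≤ r) : shiftMatrix R row col i j r = 0 := by
  ext a b
  have := hP.col_lt b
  simp only [shiftMatrix, of_apply, Matrix.zero_apply, ite_eq_right_iff, and_imp]
  rintro - rfl
  omega

theorem nilpotent_eq_sum_shiftMatrix [Fintype κ] :
    nilpotent R row col = ∑ k, shiftMatrix R row col k k 1 := by
  ext a b
  simp only [nilpotent, shiftMatrix, Matrix.sum_apply, of_apply, ite_and, Finset.sum_ite_eq,
    Finset.mem_univ, if_true]
  by_cases h : row a = row b <;> simp [h, Ne.symm]

theorem triangularPart_or (ρ σ : κ → κ → Prop) :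
    triangularPart R row col lam (fun i j => ρ i j ∨ σ i j) =
      triangularPart R row col lam ρ ⊔ triangularPart R row col lam σ := by
  simp only [triangularPart, ← Submodule.span_union]
  congr 1
  ext M
  simp [or_and_right, exists_or]

theorem triangularPart_eq_span_diagonal :
    triangularPart R row col lam (fun i j => i = j) =
      Submodule.span R {M | ∃ i r, r < lam i ∧ M = shiftMatrix R row col i i r} := by
  rw [triangularPart]
  congr 1
  ext M
  constructor
  · rintro ⟨i, _, r, rfl, -, hr, rfl⟩
    exact ⟨i, r, hr, rfl⟩
  · rintro ⟨i, r, hr, rfl⟩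
    exact ⟨i, i, r, rfl, by omega, hr, rfl⟩

theorem triangularPart_le_blockSupported (ρ : κ → κ → Prop) :
    triangularPart R row col lam ρ ≤ blockSupported R row ρ := by
  refine Submodule.span_le.2 ?_
  rintro _ ⟨i, j, r, hij, -, -, rfl⟩ a b hab
  simp only [shiftMatrix, of_apply, ite_eq_right_iff, and_imp]
  rintro rfl rfl
  exact (hab hij).elim

theorem triangularPart_inf_sup_eq_bot {ρ σ τ : κ → κ → Prop}
    (h : ∀ i j, ρ i j → ¬(σ i j ∨ τ i j)) :
    triangularPart R row col lam ρ ⊓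
      (triangularPart R row col lam σ ⊔ triangularPart R row col lam τ) = ⊥ := by
  refine disjoint_iff.1 ((disjoint_blockSupported h).mono
    (triangularPart_le_blockSupported ρ) (sup_le ?_ ?_))
  · exact (triangularPart_le_blockSupported σ).trans (blockSupported_mono fun _ _ => Or.inl)
  · exact (triangularPart_le_blockSupported τ).trans (blockSupported_mono fun _ _ => Or.inr)

variable [Fintype ι]

variable (row col) in
/-- The entry of `X` at the boxes `(i, p)` and `(j, q)`, or `0` if one of them does not exist. -/
def boxEntry (X : Matrix ι ι R) (i j : κ) (p q : ℕ) : R :=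
  boxIndicator R row col i p ⬝ᵥ X *ᵥ boxIndicator R row col j q

theorem boxEntry_of_le_left (hP : IsBoxLabelling lam row col) (X : Matrix ι ι R) {i : κ}
    {p : ℕ} (h : lam i ≤ p) (j : κ) (q : ℕ) : boxEntry row col X i j p q = 0 := by
  simp [boxEntry, boxIndicator_of_le hP h]

theorem boxEntry_of_le_right (hP : IsBoxLabelling lam row col) (X : Matrix ι ι R) (i : κ)
    (p : ℕ) {j : κ} {q : ℕ} (h : lam j ≤ q) : boxEntry row col X i j p q = 0 := by
  simp [boxEntry, boxIndicator_of_le hP h]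

theorem nilpotent_mulVec_boxIndicator_zero (j : κ) :
    nilpotent R row col *ᵥ boxIndicator R row col j 0 = 0 := by
  funext a
  simp only [nilpotent, boxIndicator, mulVec, dotProduct, of_apply, Pi.zero_apply]
  refine Finset.sum_eq_zero fun b _ => ?_
  split_ifs <;> simp_all

theorem shiftMatrix_mul_shiftMatrix_of_ne {i j k l : κ} (hjk : j ≠ k) (r s : ℕ) :
    shiftMatrix R row col i j r * shiftMatrix R row col k l s = 0 := by
  ext a c
  simp only [shiftMatrix, mul_apply, of_apply, Matrix.zero_apply]
  refine Finset.sum_eq_zero fun b _ => ?_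
  split_ifs with h1 h2 <;> simp_all

theorem shiftMatrix_mul_shiftMatrix (hP : IsBoxLabelling lam row col) {i j l : κ} {r s : ℕ}
    (h : lam l ≤ lam j + s) :
    shiftMatrix R row col i j r * shiftMatrix R row col j l s =
      shiftMatrix R row col i l (r + s) := by
  ext a c
  by_cases hb : col a + r < lam j
  · obtain ⟨b, hbj, hbc⟩ := hP.exists_box j (col a + r) hb
    rw [mul_apply, Finset.sum_eq_single b]
    · by_cases ha : row a = i <;> simp [shiftMatrix, hbj, hbc, add_assoc, ha]
    · intro b' _ hb'
      have : ¬(row b' = j ∧ col b' = col a + r) :=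
        fun h => hb' (hP.injective _ _ (h.1.trans hbj.symm) (h.2.trans hbc.symm))
      simp only [shiftMatrix, of_apply]
      rw [if_neg (by tauto), zero_mul]
    · simp
  · have := hP.col_lt c
    simp only [shiftMatrix, mul_apply, of_apply]
    rw [if_neg (by rintro ⟨-, rfl, hc⟩; omega), Finset.sum_eq_zero]
    intro b _
    have := hP.col_lt b
    rw [if_neg (by rintro ⟨-, rfl, hc⟩; omega), zero_mul]

theorem nilpotent_mul_shiftMatrix [Fintype κ] (hP : IsBoxLabelling lam row col) {i j : κ}
    {r : ℕ} (h : lam j ≤ lam i + r) :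
    nilpotent R row col * shiftMatrix R row col i j r =
      shiftMatrix R row col i j r * nilpotent R row col := by
  rw [nilpotent_eq_sum_shiftMatrix, Finset.sum_mul, Finset.mul_sum, Finset.sum_eq_single i,
    Finset.sum_eq_single j, shiftMatrix_mul_shiftMatrix hP (by omega),
    shiftMatrix_mul_shiftMatrix hP (by omega), add_comm]
  · exact fun k _ hk => shiftMatrix_mul_shiftMatrix_of_ne (Ne.symm hk) r 1
  · simp
  · exact fun k _ hk => shiftMatrix_mul_shiftMatrix_of_ne hk 1 r
  · simp

theorem shiftMatrix_mul_shiftMatrix_mem_triangularPart (hP : IsBoxLabelling lam row col)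
    {ρ : κ → κ → Prop} (htrans : ∀ i j k, ρ i j → ρ j k → ρ i k) {i j k l : κ} {r s : ℕ}
    (hij : ρ i j) (hkl : ρ k l) (hr : lam j ≤ lam i + r) (hs : lam l ≤ lam k + s) :
    shiftMatrix R row col i j r * shiftMatrix R row col k l s ∈
      triangularPart R row col lam ρ := by
  by_cases hjk : j = k
  · subst hjk
    rw [shiftMatrix_mul_shiftMatrix hP hs]
    rcases lt_or_ge (r + s) (lam l) with hrs | hrs
    · exact Submodule.subset_span ⟨i, l, r + s, htrans _ _ _ hij hkl, by omega, hrs, rfl⟩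
    · rw [shiftMatrix_eq_zero hP hrs]
      exact zero_mem _
  · rw [shiftMatrix_mul_shiftMatrix_of_ne hjk]
    exact zero_mem _

variable [DecidableEq ι]

theorem boxIndicator_vecMul_nilpotent (hP : IsBoxLabelling lam row col) (i : κ) (p : ℕ) :
    boxIndicator R row col i p ᵥ* nilpotent R row col = boxIndicator R row col i (p + 1) := by
  rcases lt_or_ge p (lam i) with h | h
  · obtain ⟨a, rfl, rfl⟩ := hP.exists_box i p h
    funext b
    simp [boxIndicator_row_col hP, nilpotent, boxIndicator, eq_comm]
  · rw [boxIndicator_of_le hP h, boxIndicator_of_le hP (by omega), zero_vecMul]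

theorem nilpotent_mulVec_boxIndicator_succ (hP : IsBoxLabelling lam row col) {j : κ} {q : ℕ}
    (h : q + 1 < lam j) :
    nilpotent R row col *ᵥ boxIndicator R row col j (q + 1) = boxIndicator R row col j q := by
  obtain ⟨b, rfl, hb⟩ := hP.exists_box j (q + 1) h
  rw [← hb, boxIndicator_row_col hP]
  funext a
  simp [nilpotent, boxIndicator, hb, eq_comm]

theorem boxEntry_row_col (hP : IsBoxLabelling lam row col) (X : Matrix ι ι R) (a b : ι) :
    boxEntry row col X (row a) (row b) (col a) (col b) = X a b := by
  simp [boxEntry, boxIndicator_row_col hP]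

section Commuting

variable {X : Matrix ι ι R} (hP : IsBoxLabelling lam row col)
  (hX : nilpotent R row col * X = X * nilpotent R row col)
include hP hX

theorem isDiagonalInvariant_boxEntry (i j : κ) :
    IsDiagonalInvariant (lam j) (boxEntry row col X i j) := fun p q h => by
  rw [boxEntry, ← boxIndicator_vecMul_nilpotent hP, ← dotProduct_mulVec, mulVec_mulVec, hX,
    ← mulVec_mulVec, nilpotent_mulVec_boxIndicator_succ hP h, boxEntry]

theorem boxEntry_succ_zero (i j : κ) (p : ℕ) : boxEntry row col X i j (p + 1) 0 = 0 := by
  rw [boxEntry, ← boxIndicator_vecMul_nilpotent hP, ← dotProduct_mulVec, mulVec_mulVec, hX,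
    ← mulVec_mulVec, nilpotent_mulVec_boxIndicator_zero, mulVec_zero, dotProduct_zero]

theorem eq_sum_smul_shiftMatrix [Fintype κ] :
    X = ∑ i, ∑ j, ∑ r ∈ Finset.range (lam j),
      boxEntry row col X i j 0 r • shiftMatrix R row col i j r := by
  ext a b
  have hg := isDiagonalInvariant_boxEntry hP hX (row a) (row b)
  simp only [Matrix.sum_apply, Matrix.smul_apply, shiftMatrix, of_apply, smul_eq_mul, mul_ite,
    mul_one, mul_zero, ite_and, Finset.sum_ite_irrel, Finset.sum_const_zero, Finset.sum_ite_eq,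
    Finset.mem_univ, if_true]
  rw [← boxEntry_row_col hP X a b]
  have hb := hP.col_lt b
  by_cases hab : col a ≤ col b
  · rw [Finset.sum_eq_single (col b - col a), if_pos (by omega), hg.apply_eq_apply_zero_sub hab hb]
    · exact fun r _ hr => if_neg (by omega)
    · exact fun h => (h (Finset.mem_range.2 (by omega))).elim
  · rw [Finset.sum_eq_zero fun r _ => if_neg (by omega)]
    exact hg.apply_eq_zero_of_lt (boxEntry_succ_zero hP hX _ _)
      (fun p q hq => boxEntry_of_le_right hP X _ p hq) (by omega)

end Commuting

theorem centralizer_le_triangularPart [Fintype κ] (hP : IsBoxLabelling lam row col)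
    {ρ : κ → κ → Prop} (hρ : ∀ i j, ρ i j) :
    Subalgebra.toSubmodule (Subalgebra.centralizer R {nilpotent R row col}) ≤
      triangularPart R row col lam ρ := by
  intro X hX
  rw [Subalgebra.mem_toSubmodule, Subalgebra.mem_centralizer_iff] at hX
  have hXe := hX _ rfl
  rw [eq_sum_smul_shiftMatrix hP hXe]
  refine Submodule.sum_mem _ fun i _ => Submodule.sum_mem _ fun j _ =>
    Submodule.sum_mem _ fun r hr => ?_
  rw [Finset.mem_range] at hr
  rcases le_or_gt (lam j) (lam i + r) with h | h
  · exact Submodule.smul_mem _ _ (Submodule.subset_span ⟨i, j, r, hρ i j, by omega, hr, rfl⟩)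
  · rw [(isDiagonalInvariant_boxEntry hP hXe i j).apply_zero_eq_zero
      (boxEntry_of_le_left hP X le_rfl j) h, zero_smul]
    exact zero_mem _

theorem triangularPart_le_centralizer [Fintype κ] (hP : IsBoxLabelling lam row col)
    (ρ : κ → κ → Prop) :
    triangularPart R row col lam ρ ≤
      Subalgebra.toSubmodule (Subalgebra.centralizer R {nilpotent R row col}) := by
  refine Submodule.span_le.2 ?_
  rintro _ ⟨i, j, r, -, hr, -, rfl⟩
  simp only [SetLike.mem_coe, Subalgebra.mem_toSubmodule, Subalgebra.mem_centralizer_iff,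
    Set.mem_singleton_iff, forall_eq]
  exact nilpotent_mul_shiftMatrix hP (by omega)

theorem mul_mem_triangularPart (hP : IsBoxLabelling lam row col)
    {ρ : κ → κ → Prop} (htrans : ∀ i j k, ρ i j → ρ j k → ρ i k)
    {X Y : Matrix ι ι R} (hX : X ∈ triangularPart R row col lam ρ)
    (hY : Y ∈ triangularPart R row col lam ρ) : X * Y ∈ triangularPart R row col lam ρ := by
  have hXY := Submodule.mul_mem_mul hX hY
  rw [triangularPart, Submodule.span_mul_span] at hXY
  refine Submodule.span_le.2 ?_ hXY
  rintro _ ⟨_, ⟨i, j, r, hij, hr, -, rfl⟩, _, ⟨k, l, s, hkl, hs, -, rfl⟩, rfl⟩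
  exact shiftMatrix_mul_shiftMatrix_mem_triangularPart hP htrans hij hkl (by omega) (by omega)

theorem mul_sub_mul_mem_triangularPart (hP : IsBoxLabelling lam row col)
    {ρ : κ → κ → Prop} (htrans : ∀ i j k, ρ i j → ρ j k → ρ i k)
    {X Y : Matrix ι ι R} (hX : X ∈ triangularPart R row col lam ρ)
    (hY : Y ∈ triangularPart R row col lam ρ) : X * Y - Y * X ∈ triangularPart R row col lam ρ :=
  sub_mem (mul_mem_triangularPart hP htrans hX hY) (mul_mem_triangularPart hP htrans hY hX)

theorem mul_comm_of_mem_triangularPart_diagonal (hP : IsBoxLabelling lam row col)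
    {X Y : Matrix ι ι R} (hX : X ∈ triangularPart R row col lam (fun i j => i = j))
    (hY : Y ∈ triangularPart R row col lam (fun i j => i = j)) : X * Y = Y * X := by
  refine Submodule.mul_comm_of_mem_span ?_ hX hY
  rintro _ ⟨i, _, r, rfl, -, -, rfl⟩ _ ⟨j, _, s, rfl, -, -, rfl⟩
  by_cases hij : i = j
  · subst hij
    rw [shiftMatrix_mul_shiftMatrix hP (Nat.le_add_right _ _),
      shiftMatrix_mul_shiftMatrix hP (Nat.le_add_right _ _), add_comm]
  · rw [shiftMatrix_mul_shiftMatrix_of_ne hij, shiftMatrix_mul_shiftMatrix_of_ne (Ne.symm hij)]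

end Pyramid

section RowTableau

variable {N : ℕ} {κ : Type*} [LinearOrder κ] {row : Fin N → κ} {col : Fin N → ℕ}
  (horder : ∀ a b : Fin N, a < b ↔ (row a < row b ∨ (row a = row b ∧ col a < col b)))
include horder

theorem eq_of_row_eq_of_col_eq {a b : Fin N} (hrow : row a = row b) (hcol : col a = col b) :
    a = b := by
  by_contra hne
  rcases lt_or_gt_of_ne hne with h | h
  · simpa [hrow, hcol] using (horder a b).1 h
  · simpa [hrow, hcol] using (horder b a).1 h

theorem isBoxLabelling_of_rowTableau [Fintype κ] {lam : κ → ℕ}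
    (hcol : ∀ a, col a < lam (row a)) (hsum : ∑ i, lam i = N) :
    Pyramid.IsBoxLabelling lam row col where
  col_lt := hcol
  injective _ _ := eq_of_row_eq_of_col_eq horder
  exists_box := by
    let box : Fin N → Σ i, Fin (lam i) := fun a => ⟨row a, col a, hcol a⟩
    have hinj : box.Injective := fun a b h =>
      eq_of_row_eq_of_col_eq horder (congrArg Sigma.fst h)
        (congrArg (fun x : Σ i, Fin (lam i) => (x.2 : ℕ)) h)
    have hsurj := ((Fintype.bijective_iff_injective_and_card box).2 ⟨hinj, by simp [hsum]⟩).2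
    intro i c hc
    obtain ⟨a, ha⟩ := hsurj ⟨i, c, hc⟩
    exact ⟨a, congrArg Sigma.fst ha, congrArg (fun x : Σ i, Fin (lam i) => (x.2 : ℕ)) ha⟩

theorem col_lt_col_of_lt_of_lt {a b c : Fin N} (hac : a < c) (hcb : c < b)
    (hab : row a = row b) : col a < col c ∧ col c < col b := by
  have h1 := (horder a c).1 hac
  have h2 := (horder c b).1 hcb
  rw [← hab] at h2
  rcases h1 with h1 | ⟨h1, h1'⟩ <;> rcases h2 with h2 | ⟨h2, h2'⟩
  · order
  · order
  · order
  · exact ⟨h1', h2'⟩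

theorem succ_iff_of_rowTableau {lam : κ → ℕ} (hP : Pyramid.IsBoxLabelling lam row col)
    (a b : Fin N) :
    ((b : ℕ) = a + 1 ∧ row a = row b) ↔ (row a = row b ∧ col b = col a + 1) := by
  constructor
  · rintro ⟨hb, hrow⟩
    refine ⟨hrow, ?_⟩
    have hlt : col a < col b :=
      (((horder a b).1 (Fin.lt_def.2 (by omega))).resolve_left (by rw [hrow]; order)).2
    by_contra hne
    have hlam := hP.col_lt b
    rw [← hrow] at hlam
    obtain ⟨c, hcrow, hccol⟩ := hP.exists_box (row a) (col a + 1) (by omega)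
    have hac := Fin.lt_def.1 ((horder a c).2 (Or.inr ⟨hcrow.symm, by omega⟩))
    have hcb := Fin.lt_def.1 ((horder c b).2 (Or.inr ⟨hcrow.trans hrow, by omega⟩))
    omega
  · rintro ⟨hrow, hcol⟩
    refine ⟨?_, hrow⟩
    have hab := Fin.lt_def.1 ((horder a b).2 (Or.inr ⟨hrow, by omega⟩))
    by_contra hne
    obtain ⟨h1, h2⟩ := col_lt_col_of_lt_of_lt horder (c := ⟨a + 1, by omega⟩)
      (Fin.lt_def.2 (by simp)) (Fin.lt_def.2 (by simp; omega)) hrow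
    omega

theorem nilpotent_eq_of_rowTableau [DecidableEq κ] (R : Type*) [CommRing R] {lam : κ → ℕ}
    (hP : Pyramid.IsBoxLabelling lam row col) :
    (of fun a b : Fin N => if (b : ℕ) = a + 1 ∧ row a = row b then (1 : R) else 0) =
      Pyramid.nilpotent R row col := by
  ext a b
  exact if_congr (succ_iff_of_rowTableau horder hP a b) rfl rfl

end RowTableau

open Pyramid

theorem triangular_decomposition_general
    (n N : ℕ)
    (lam : Fin n → ℕ)
    (hsum : ∑ i, lam i = N)
    (row : Fin N → Fin n) (col : Fin N → ℕ)
    (hcol : ∀ a, col a < lam (row a))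
    (horder : ∀ a b : Fin N, a < b ↔ (row a < row b ∨ (row a = row b ∧ col a < col b)))
    (e : Matrix (Fin N) (Fin N) ℂ)
    (he : e = ∑ a : Fin N, ∑ b : Fin N,
      if (b : ℕ) = (a : ℕ) + 1 ∧ row a = row b then Matrix.single a b 1 else 0)
    (E : Fin n → Fin n → ℕ → Matrix (Fin N) (Fin N) ℂ)
    (hE : ∀ i j r, E i j r = ∑ a : Fin N, ∑ b : Fin N,
      if row a = i ∧ row b = j ∧ col b = col a + r then Matrix.single a b 1 else 0)
    (nminus hdiag nplus : Submodule ℂ (Matrix (Fin N) (Fin N) ℂ))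
    (hnm : nminus = Submodule.span ℂ {M | ∃ (i j : Fin n) (r : ℕ),
      j < i ∧ lam j - min (lam i) (lam j) ≤ r ∧ r < lam j ∧ M = E i j r})
    (hhd : hdiag = Submodule.span ℂ {M | ∃ (i : Fin n) (r : ℕ),
      r < lam i ∧ M = E i i r})
    (hnp : nplus = Submodule.span ℂ {M | ∃ (i j : Fin n) (r : ℕ),
      i < j ∧ lam j - min (lam i) (lam j) ≤ r ∧ r < lam j ∧ M = E i j r}) :
    (∀ X Y : Matrix (Fin N) (Fin N) ℂ, X ∈ nminus → Y ∈ nminus → X * Y - Y * X ∈ nminus) ∧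
    (∀ X Y : Matrix (Fin N) (Fin N) ℂ, X ∈ hdiag → Y ∈ hdiag → X * Y - Y * X ∈ hdiag) ∧
    (∀ X Y : Matrix (Fin N) (Fin N) ℂ, X ∈ nplus → Y ∈ nplus → X * Y - Y * X ∈ nplus) ∧
    (∀ X Y : Matrix (Fin N) (Fin N) ℂ, X ∈ hdiag → Y ∈ hdiag → X * Y = Y * X) ∧
    nminus ≤ Subalgebra.toSubmodule
      (Subalgebra.centralizer ℂ ({e} : Set (Matrix (Fin N) (Fin N) ℂ))) ∧
    hdiag ≤ Subalgebra.toSubmodule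
      (Subalgebra.centralizer ℂ ({e} : Set (Matrix (Fin N) (Fin N) ℂ))) ∧
    nplus ≤ Subalgebra.toSubmodule
      (Subalgebra.centralizer ℂ ({e} : Set (Matrix (Fin N) (Fin N) ℂ))) ∧
    nminus ⊓ (hdiag ⊔ nplus) = ⊥ ∧
    hdiag ⊓ (nminus ⊔ nplus) = ⊥ ∧
    nplus ⊓ (nminus ⊔ hdiag) = ⊥ ∧
    nminus ⊔ hdiag ⊔ nplus = Subalgebra.toSubmodule
      (Subalgebra.centralizer ℂ ({e} : Set (Matrix (Fin N) (Fin N) ℂ))) := by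
  have hP := isBoxLabelling_of_rowTableau horder hcol hsum
  obtain rfl : E = shiftMatrix ℂ row col := by
    funext i j r
    rw [hE, Matrix.sum_sum_ite_single_one_s11]
    rfl
  obtain rfl : e = nilpotent ℂ row col := by
    rw [he, Matrix.sum_sum_ite_single_one_s11, nilpotent_eq_of_rowTableau horder ℂ hP]
  replace hnm : nminus = triangularPart ℂ row col lam (fun i j => j < i) := hnm
  replace hnp : nplus = triangularPart ℂ row col lam (fun i j => i < j) := hnp
  rw [← triangularPart_eq_span_diagonal] at hhd
  subst hnm hhd hnp
  have hcent := triangularPart_le_centralizer (R := ℂ) (lam := lam) hP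
  refine ⟨fun X Y => mul_sub_mul_mem_triangularPart (ρ := fun i j => j < i) hP
      fun _ _ _ h h' => h'.trans h,
    fun X Y => mul_sub_mul_mem_triangularPart (ρ := fun i j => i = j) hP fun _ _ _ => Eq.trans,
    fun X Y => mul_sub_mul_mem_triangularPart (ρ := fun i j => i < j) hP fun _ _ _ => lt_trans,
    fun X Y => mul_comm_of_mem_triangularPart_diagonal hP,
    hcent _, hcent _, hcent _, triangularPart_inf_sup_eq_bot (by omega),
    triangularPart_inf_sup_eq_bot (by omega), triangularPart_inf_sup_eq_bot (by omega),
    le_antisymm (sup_le (sup_le (hcent _) (hcent _)) (hcent _)) ?_⟩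
  rw [← triangularPart_or, ← triangularPart_or]
  exact centralizer_le_triangularPart hP fun i j => by omega

/-- with `𝔫₋ = span{E^{(r)}_{ij} : i > j}`, `𝔥 = span{E^{(r)}_{ii}}` and
`𝔫₊ = span{E^{(r)}_{ij} : i < j}` (`r` running over admissible values), the three
subspaces are Lie subalgebras of the centralizer `𝔞`, `𝔥` is abelian, and
`𝔞 = 𝔫₋ ⊕ 𝔥 ⊕ 𝔫₊` as a direct sum of vector spaces. -/
theorem triangular_decomposition
    (n N : ℕ) (hn : 0 < n)
    (lam : Fin n → ℕ) (hpos : ∀ i, 0 < lam i) (hmono : Monotone lam)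
    (hsum : ∑ i, lam i = N)
    (row : Fin N → Fin n) (col : Fin N → ℕ)
    (hcol : ∀ a, col a < lam (row a))
    (horder : ∀ a b : Fin N, a < b ↔ (row a < row b ∨ (row a = row b ∧ col a < col b)))
    (e : Matrix (Fin N) (Fin N) ℂ)
    (he : e = ∑ a : Fin N, ∑ b : Fin N,
      if (b : ℕ) = (a : ℕ) + 1 ∧ row a = row b then Matrix.single a b 1 else 0)
    (E : Fin n → Fin n → ℕ → Matrix (Fin N) (Fin N) ℂ)
    (hE : ∀ i j r, E i j r = ∑ a : Fin N, ∑ b : Fin N,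
      if row a = i ∧ row b = j ∧ col b = col a + r then Matrix.single a b 1 else 0)
    (nminus hdiag nplus : Submodule ℂ (Matrix (Fin N) (Fin N) ℂ))
    (hnm : nminus = Submodule.span ℂ {M | ∃ (i j : Fin n) (r : ℕ),
      j < i ∧ lam j - min (lam i) (lam j) ≤ r ∧ r < lam j ∧ M = E i j r})
    (hhd : hdiag = Submodule.span ℂ {M | ∃ (i : Fin n) (r : ℕ),
      r < lam i ∧ M = E i i r})
    (hnp : nplus = Submodule.span ℂ {M | ∃ (i j : Fin n) (r : ℕ),
      i < j ∧ lam j - min (lam i) (lam j) ≤ r ∧ r < lam j ∧ M = E i j r}) :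
    (∀ X Y : Matrix (Fin N) (Fin N) ℂ, X ∈ nminus → Y ∈ nminus → X * Y - Y * X ∈ nminus) ∧
    (∀ X Y : Matrix (Fin N) (Fin N) ℂ, X ∈ hdiag → Y ∈ hdiag → X * Y - Y * X ∈ hdiag) ∧
    (∀ X Y : Matrix (Fin N) (Fin N) ℂ, X ∈ nplus → Y ∈ nplus → X * Y - Y * X ∈ nplus) ∧
    (∀ X Y : Matrix (Fin N) (Fin N) ℂ, X ∈ hdiag → Y ∈ hdiag → X * Y = Y * X) ∧
    nminus ≤ Subalgebra.toSubmodule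
      (Subalgebra.centralizer ℂ ({e} : Set (Matrix (Fin N) (Fin N) ℂ))) ∧
    hdiag ≤ Subalgebra.toSubmodule
      (Subalgebra.centralizer ℂ ({e} : Set (Matrix (Fin N) (Fin N) ℂ))) ∧
    nplus ≤ Subalgebra.toSubmodule
      (Subalgebra.centralizer ℂ ({e} : Set (Matrix (Fin N) (Fin N) ℂ))) ∧
    nminus ⊓ (hdiag ⊔ nplus) = ⊥ ∧
    hdiag ⊓ (nminus ⊔ nplus) = ⊥ ∧
    nplus ⊓ (nminus ⊔ hdiag) = ⊥ ∧
    nminus ⊔ hdiag ⊔ nplus = Subalgebra.toSubmodule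
      (Subalgebra.centralizer ℂ ({e} : Set (Matrix (Fin N) (Fin N) ℂ))) :=
  triangular_decomposition_general n N lam hsum row col hcol horder e he E hE nminus hdiag nplus hnm
    hhd hnp
end

section
/- Let R be a (possibly noncommutative) ring and A an n×n matrix over R such that A_{ij} = 0 whenever j > i + 1 and each superdiagonal entry A_{i,i+1} lies in the center of R. Then cdet A = Σ_{p=0}^{n−1} Σ_{0=i_0<i_1<⋯<i_p<i_{p+1}=n} A_{i_1, i_0+1}·A_{i_2, i_1+1}⋯A_{i_{p+1}, i_p+1} · Π_{j∈J} (−A_{j−1, j}), where J is the complement of the set {i_0+1, i_1+1, …, i_p+1} in {1,…,n}. -/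
/-!
Every term of the column-determinant ends with a factor from the last column, so `cdet` can be
expanded along its last column even over a noncommutative ring. For a Hessenberg matrix of size
`n + 1` only the rows `n` and `n + 1` contribute:
`cdet A = cdet A' · A_{n+1,n+1} - cdet A'' · A_{n,n+1}`, where `A'` is the leading principal
minor and `A''` is `A'` with its last row replaced by that of `A`; `A''` is again Hessenberg with
the same superdiagonal. The chain sum obeys the same recursion, according to whether `n` is a
chain element or `n + 1` a gap. Centrality of the superdiagonal is needed only to move the
product over the gaps past the new factor `A_{n+1,n+1}`.
-/

theorem Finset.sort_insert_of_forall_lt {α : Type*} [LinearOrder α] {s : Finset α} {x : α}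
    (hx : ∀ b ∈ s, b < x) : (insert x s).sort (· ≤ ·) = s.sort (· ≤ ·) ++ [x] := by
  refine (sortedLT_sort _).eq_of_mem_iff ?_ fun y => by simp [or_comm]
  rw [List.sortedLT_iff_pairwise, List.pairwise_append]
  exact ⟨(sortedLT_sort s).pairwise, List.pairwise_singleton _ x,
    fun b hb c hc => List.mem_singleton.1 hc ▸ hx b ((mem_sort _).1 hb)⟩

theorem List.zip_cons_append_singleton {α : Type*} (y x : α) (l : List α) :
    (y :: (l ++ [x])).zip (l ++ [x])
      = (y :: l).zip l ++ [((y :: l).getLast (cons_ne_nil _ _), x)] := by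
  induction l generalizing y with
  | nil => rfl
  | cons b l ih => simp [ih]

namespace Matrix

variable {R : Type*} [Ring R]

def cdet {n : ℕ} (A : Matrix (Fin n) (Fin n) R) : R :=
  ∑ σ : Equiv.Perm (Fin n), (Equiv.Perm.sign σ : ℤ) • (List.ofFn fun j => A (σ j) j).prod

open Equiv in
theorem cdet_succ_column_last {n : ℕ} (A : Matrix (Fin (n + 1)) (Fin (n + 1)) R) :
    cdet A = cdet (A.submatrix Fin.castSucc Fin.castSucc) * A (Fin.last n) (Fin.last n)
      - ∑ p : Fin n, cdet ((A.submatrix Fin.castSucc Fin.castSucc).updateRow p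
          fun j => A (Fin.last n) j.castSucc) * A p.castSucc (Fin.last n) := by
  -- `D σ = (σ (last n), σ followed by the swap of σ (last n) and last n, on the first n indices)`
  let D : Perm (Fin (n + 1)) ≃ Option (Fin n) × Perm (Fin n) :=
    (permCongr finSuccEquivLast).trans Perm.decomposeOption
  have hsign_none (τ) : Perm.sign (D.symm (none, τ)) = Perm.sign τ := by
    simp [D, Perm.sign_permCongr]
  have hsign_some (p τ) : Perm.sign (D.symm (some p, τ)) = -Perm.sign τ := by
    simp [D, Perm.sign_permCongr]
  have happly_none (τ j) : D.symm (none, τ) (Fin.castSucc j) = Fin.castSucc (τ j) := by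
    simp [D]
  have happly_some (p τ j) : D.symm (some p, τ) (Fin.castSucc j)
      = if τ j = p then Fin.last n else Fin.castSucc (τ j) := by
    simp only [D, symm_trans_apply, Perm.decomposeOption_symm_apply, permCongr_symm_apply,
      Perm.coe_mul, Function.comp_apply, finSuccEquivLast_castSucc, optionCongr_apply,
      Option.map_some, swap_apply_def, reduceCtorEq, if_false, Option.some.injEq]
    split_ifs <;> simp
  have happly_last (o τ) : D.symm (o, τ) (Fin.last n) = finSuccEquivLast.symm o := by
    simp [D]
  have hprod (σ : Perm (Fin (n + 1))) : (List.ofFn fun j => A (σ j) j).prod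
      = (List.ofFn fun j : Fin n => A (σ j.castSucc) j.castSucc).prod
        * A (σ (Fin.last n)) (Fin.last n) := by
    rw [List.ofFn_succ', List.prod_concat]
  rw [cdet, ← D.symm.sum_comp, Fintype.sum_prod_type, Fintype.sum_option]
  simp only [hprod, hsign_none, hsign_some, happly_none, happly_some, happly_last, cdet,
    Finset.sum_mul, smul_mul_assoc]
  simp [updateRow_apply, apply_ite A, ite_apply, sub_eq_add_neg, Finset.sum_neg_distrib]

theorem cdet_succ_succ_of_hessenberg {m : ℕ} (A : Matrix (Fin (m + 2)) (Fin (m + 2)) R)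
    (hA : ∀ i j : Fin (m + 2), (i : ℕ) + 1 < j → A i j = 0) :
    cdet A = cdet (A.submatrix Fin.castSucc Fin.castSucc) * A (Fin.last _) (Fin.last _)
      - cdet ((A.submatrix Fin.castSucc Fin.castSucc).updateRow (Fin.last m)
          fun j => A (Fin.last _) j.castSucc) * A (Fin.last m).castSucc (Fin.last _) := by
  rw [cdet_succ_column_last, Fin.sum_univ_castSucc,
    Finset.sum_eq_zero fun p _ => by rw [hA _ _ (by simp), mul_zero], zero_add]

end Matrix

section HessenbergSum

variable {R : Type*} [Ring R]

/- `a i j` is the entry in row `i` and column `j`, indexed from `1`; the chain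
`0 = i_0 < i_1 < ⋯ < i_p < i_{p+1} = n` is encoded by `T = {i_1, …, i_p}`, and the gaps are
`{1, …, n} \ {i_0 + 1, …, i_p + 1}`. -/
def chainProd (a : ℕ → ℕ → R) (n : ℕ) (T : Finset ℕ) : R :=
  (((0 :: (T.sort (· ≤ ·) ++ [n])).zip (T.sort (· ≤ ·) ++ [n])).map
    fun p => a p.2 (p.1 + 1)).prod

def gapProd (a : ℕ → ℕ → R) (n : ℕ) (T : Finset ℕ) : R :=
  (((Finset.Icc 1 n \ ((insert 0 T).image (· + 1))).sort (· ≤ ·)).map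
    fun j => -(a (j - 1) j)).prod

def hessenbergSum (a : ℕ → ℕ → R) (n : ℕ) : R :=
  ∑ T ∈ (Finset.Icc 1 (n - 1)).powerset, chainProd a n T * gapProd a n T

theorem chainProd_congr {a b : ℕ → ℕ → R} {m k : ℕ} {T : Finset ℕ}
    (hT : ∀ i ∈ T, a i = b i) (hlast : a m = b k) : chainProd a m T = chainProd b k T := by
  simp only [chainProd, List.zip_cons_append_singleton, List.map_append, List.prod_append]
  congr 1
  · refine congrArg List.prod (List.map_congr_left fun p hp => ?_)
    rw [hT p.2 ((Finset.mem_sort _).1 (List.of_mem_zip hp).2)]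
  · simp [hlast]

theorem chainProd_insert {a : ℕ → ℕ → R} {m k : ℕ} {T : Finset ℕ} (hT : ∀ i ∈ T, i < k) :
    chainProd a m (insert k T) = chainProd a k T * a m (k + 1) := by
  rw [chainProd, Finset.sort_insert_of_forall_lt hT, List.zip_cons_append_singleton,
    List.map_append, List.prod_append]
  simp [chainProd]

theorem gapProd_congr {a b : ℕ → ℕ → R} {n : ℕ} (T : Finset ℕ) (hab : ∀ i < n, a i = b i) :
    gapProd a n T = gapProd b n T := by
  refine congrArg List.prod (List.map_congr_left fun j hj => ?_)
  have := Finset.mem_Icc.1 (Finset.mem_sdiff.1 ((Finset.mem_sort _).1 hj)).1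
  rw [hab (j - 1) (by omega)]

theorem gapProd_insert_self (a : ℕ → ℕ → R) (n : ℕ) (T : Finset ℕ) :
    gapProd a (n + 1) (insert n T) = gapProd a n T := by
  have hgap : Finset.Icc 1 (n + 1) \ (insert 0 (insert n T)).image (· + 1)
      = Finset.Icc 1 n \ (insert 0 T).image (· + 1) := by
    ext j
    simp only [Finset.mem_sdiff, Finset.mem_Icc, Finset.mem_image, Finset.mem_insert]
    grind
  rw [gapProd, gapProd, hgap]

theorem gapProd_succ (a : ℕ → ℕ → R) {n : ℕ} (hn : 0 < n) {T : Finset ℕ} (hT : n ∉ T) :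
    gapProd a (n + 1) T = gapProd a n T * -a n (n + 1) := by
  have hgap : Finset.Icc 1 (n + 1) \ (insert 0 T).image (· + 1)
      = insert (n + 1) (Finset.Icc 1 n \ (insert 0 T).image (· + 1)) := by
    ext j
    simp only [Finset.mem_sdiff, Finset.mem_Icc, Finset.mem_image, Finset.mem_insert]
    grind
  rw [gapProd, hgap, Finset.sort_insert_of_forall_lt, List.map_append, List.prod_append]
  · simp [gapProd]
  · intro j hj
    have := (Finset.mem_Icc.1 (Finset.mem_sdiff.1 hj).1).2
    omega

theorem gapProd_commute {a : ℕ → ℕ → R} {n : ℕ}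
    (hc : ∀ i, 1 ≤ i → i + 1 ≤ n → ∀ x, Commute (a i (i + 1)) x) (T : Finset ℕ) (x : R) :
    Commute (gapProd a n T) x := by
  refine Commute.list_prod_left _ _ fun y hy => ?_
  obtain ⟨j, hj, rfl⟩ := List.mem_map.1 hy
  obtain ⟨hjn, hj1⟩ := Finset.mem_sdiff.1 ((Finset.mem_sort _).1 hj)
  have h1 : j ≠ 1 := fun h => hj1 (Finset.mem_image.2 ⟨0, Finset.mem_insert_self _ _, h.symm⟩)
  have h2 := Finset.mem_Icc.1 hjn
  have := hc (j - 1) (by omega) (by omega) x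
  rw [Nat.sub_add_cancel (by omega)] at this
  exact this.neg_left

theorem hessenbergSum_succ (a : ℕ → ℕ → R) {n : ℕ} (hn : 0 < n)
    (hc : ∀ i, 1 ≤ i → i + 1 ≤ n → ∀ x, Commute (a i (i + 1)) x) :
    hessenbergSum a (n + 1) = hessenbergSum a n * a (n + 1) (n + 1)
      - hessenbergSum (Function.update a n (a (n + 1))) n * a n (n + 1) := by
  have hIcc : Finset.Icc 1 n = insert n (Finset.Icc 1 (n - 1)) := by
    ext; simp only [Finset.mem_Icc, Finset.mem_insert]; omega
  rw [hessenbergSum, Nat.add_sub_cancel, hIcc, Finset.sum_powerset_insert (by simp; omega),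
    add_comm, sub_eq_add_neg, hessenbergSum, hessenbergSum, Finset.sum_mul, Finset.sum_mul,
    ← Finset.sum_neg_distrib]
  congr 1 <;> refine Finset.sum_congr rfl fun T hT => ?_
  · have hTn : ∀ i ∈ T, i < n := fun i hi => by
      have := Finset.mem_Icc.1 (Finset.mem_powerset.1 hT hi)
      omega
    rw [chainProd_insert hTn, gapProd_insert_self, mul_assoc, mul_assoc,
      (gapProd_commute hc T _).eq]
  · have hTn : n ∉ T := fun h => by
      have := Finset.mem_Icc.1 (Finset.mem_powerset.1 hT h)
      omega
    have hupdate : ∀ i, i ≠ n → a i = Function.update a n (a (n + 1)) i :=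
      fun i hi => (Function.update_of_ne hi _ _).symm
    rw [chainProd_congr (fun i hi => hupdate i (ne_of_mem_of_not_mem hi hTn))
        (Function.update_self n _ a).symm,
      gapProd_succ a hn hTn, gapProd_congr T fun i hi => hupdate i hi.ne]
    noncomm_ring

open Matrix in
theorem cdet_eq_hessenbergSum (m : ℕ) (a : ℕ → ℕ → R)
    (hH : ∀ i j, 1 ≤ i → j ≤ m + 1 → i + 1 < j → a i j = 0)
    (hC : ∀ i, 1 ≤ i → i + 1 ≤ m + 1 → ∀ x, Commute (a i (i + 1)) x) :
    cdet (of fun i j : Fin (m + 1) => a (i + 1) (j + 1)) = hessenbergSum a (m + 1) := by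
  induction m generalizing a with
  | zero => simp [cdet, hessenbergSum, chainProd, gapProd]
  | succ m ih =>
    set b := Function.update a (m + 1) (a (m + 1 + 1))
    have hb : ∀ i, i ≠ m + 1 → b i = a i := fun i hi => Function.update_of_ne hi _ _
    have hrow : ((of fun i j : Fin (m + 2) => a (i + 1) (j + 1)).submatrix Fin.castSucc
        Fin.castSucc).updateRow (Fin.last m) (fun j => a (m + 1 + 1) (j + 1))
        = of fun i j : Fin (m + 1) => b (i + 1) (j + 1) := by
      ext i j
      by_cases hi : i = Fin.last m
      · simp [hi, b]
      · have : (i : ℕ) + 1 ≠ m + 1 := fun h => hi (Fin.ext (by simpa using h))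
        simp [updateRow_ne hi, hb _ this]
    have hA : ∀ i j : Fin (m + 2), (i : ℕ) + 1 < j → a (i + 1) (j + 1) = 0 :=
      fun i j hij => hH _ _ (by omega) (by omega) (by omega)
    rw [cdet_succ_succ_of_hessenberg (of fun i j : Fin (m + 2) => a (i + 1) (j + 1)) hA,
      hessenbergSum_succ a (by omega : 0 < m + 1) fun i h1 h2 => hC i h1 (by omega)]
    simp only [of_apply, Fin.val_last, Fin.val_castSucc]
    rw [hrow, ← ih a (fun i j h1 h2 => hH i j h1 (by omega)) (fun i h1 h2 => hC i h1 (by omega)),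
      ← ih b (fun i j h1 h2 h3 => by rw [hb i (by omega)]; exact hH i j h1 (by omega) h3)
      (fun i h1 h2 => by rw [hb i (by omega)]; exact hC i h1 (by omega))]
    rfl

end HessenbergSum

/-- for an `n×n` matrix `A` over a (possibly noncommutative) ring with
`A_{ij} = 0` for `j > i+1` and central superdiagonal entries `A_{i,i+1}`, the
column-determinant `cdet A = Σ_σ sgn(σ)·A_{σ(1)1}⋯A_{σ(n)n}` expands as
`Σ_{p=0}^{n−1} Σ_{0=i_0<i_1<⋯<i_p<i_{p+1}=n} A_{i_1,i_0+1}⋯A_{i_{p+1},i_p+1}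
 · Π_{j∈J}(−A_{j−1,j})`, `J` being the complement of `{i_0+1,…,i_p+1}` in `{1,…,n}`.
Here `a i j` denotes the entry of `A` in row `i`, column `j` with 1-based indexing,
and an increasing chain `0 = i_0 < ⋯ < i_p < i_{p+1} = n` corresponds to the subset
`T = {i_1,…,i_p} ⊆ {1,…,n−1}`. -/
theorem cdet_hessenberg_expansion
    {R : Type*} [Ring R] (n : ℕ) (hn : 0 < n)
    (A : Matrix (Fin n) (Fin n) R)
    (hA : ∀ i j : Fin n, (i : ℕ) + 1 < (j : ℕ) → A i j = 0)
    (hcentral : ∀ i j : Fin n, (j : ℕ) = (i : ℕ) + 1 → ∀ x : R, A i j * x = x * A i j)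
    (a : ℕ → ℕ → R)
    (ha : ∀ i j : Fin n, a ((i : ℕ) + 1) ((j : ℕ) + 1) = A i j) :
    (∑ σ : Equiv.Perm (Fin n),
        (Equiv.Perm.sign σ : ℤ) • (List.ofFn fun j : Fin n => A (σ j) j).prod)
      = ∑ T ∈ (Finset.Icc 1 (n - 1)).powerset,
          (((0 :: (T.sort (· ≤ ·) ++ [n])).zip (T.sort (· ≤ ·) ++ [n])).map
              (fun p => a p.2 (p.1 + 1))).prod
            * (((Finset.Icc 1 n \ ((insert 0 T).image (· + 1))).sort (· ≤ ·)).map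
                (fun j => -(a (j - 1) j))).prod := by
  obtain ⟨m, rfl⟩ := Nat.exists_eq_add_one_of_ne_zero hn.ne'
  have hAa : A = Matrix.of fun i j : Fin (m + 1) => a (i + 1) (j + 1) := by
    ext i j
    exact (ha i j).symm
  subst hAa
  refine cdet_eq_hessenbergSum m a (fun i j hi hj hij => ?_) (fun i hi hin x => ?_)
  · have := hA ⟨i - 1, by omega⟩ ⟨j - 1, by omega⟩ (by simp only; omega)
    rwa [Matrix.of_apply, Nat.sub_add_cancel hi, Nat.sub_add_cancel (by omega)] at this
  · have := hcentral ⟨i - 1, by omega⟩ ⟨i, by omega⟩ (by simp only; omega) x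
    rwa [Matrix.of_apply, Nat.sub_add_cancel hi] at this
end

section
/- Let R be a (possibly noncommutative) ring and A an n×n matrix over R such that A_{ij} = 0 whenever j > i + 1 and each superdiagonal entry A_{i,i+1} lies in the center of R. Then the column-determinant of A equals its row-determinant: cdet A = rdet A. -/
/-!
Pair the column term of `τ⁻¹` with the row term of `τ`: they carry the same sign and are
products of the same entries `A i (τ i)`, in two orders. Both vanish unless `τ i ≤ i + 1` for
all `i`. The factors with `τ i = i + 1` are central and can be pulled to the front of either
product. On the remaining indices, those with `τ i ≤ i`, the permutation `τ` is strictly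
monotone, so the non-central factors occur in the same order in both products.
-/

namespace List

variable {M ι : Type*} [Monoid M] {g : ι → M} {p : ι → Bool}

theorem prod_map_eq_prod_map_filter_not_mul_prod_map_filter
    (hp : ∀ i, p i = false → g i ∈ Submonoid.center M) (l : List ι) :
    (l.map g).prod = ((l.filter (!p ·)).map g).prod * ((l.filter p).map g).prod := by
  induction l with
  | nil => simp
  | cons a l ih =>
    cases ha : p a
    · simp [ha, ih, mul_assoc]
    · have hcenter : ((l.filter (!p ·)).map g).prod ∈ Submonoid.center M :=
        Submonoid.list_prod_mem _ fun x hx => by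
          obtain ⟨i, hi, rfl⟩ := mem_map.mp hx
          exact hp i (by simpa using (mem_filter.mp hi).2)
      simp only [map_cons, prod_cons, filter_cons, ha, ih, if_true, Bool.not_true]
      rw [← mul_assoc, ← mul_assoc, Submonoid.mem_center_iff.mp hcenter]
      simp

theorem Perm.prod_map_eq_of_filter_eq (hp : ∀ i, p i = false → g i ∈ Submonoid.center M)
    {l₁ l₂ : List ι} (hl : l₁.Perm l₂) (hfilter : l₁.filter p = l₂.filter p) :
    (l₁.map g).prod = (l₂.map g).prod := by
  rw [prod_map_eq_prod_map_filter_not_mul_prod_map_filter hp l₁,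
    prod_map_eq_prod_map_filter_not_mul_prod_map_filter hp l₂, hfilter]
  congr 1
  refine ((hl.filter _).map g).prod_eq' (pairwise_of_forall_mem_list fun x hx y _ => ?_)
  obtain ⟨i, hi, rfl⟩ := mem_map.mp hx
  exact ((Submonoid.mem_center_iff.mp (hp i (by simpa using (mem_filter.mp hi).2))) y).symm

end List

namespace Equiv.Perm

variable {n : ℕ}

theorem filter_ofFn_inv_eq_filter_finRange (τ : Perm (Fin n)) (p : Fin n → Bool)
    (hτ : StrictMonoOn τ {i | p i}) :
    (List.ofFn ⇑τ⁻¹).filter p = (List.finRange n).filter p := by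
  refine List.Perm.eq_of_pairwise' (r := (· < ·)) ?_
    ((List.pairwise_lt_finRange n).filter p) ((τ⁻¹.ofFn_comp_perm id).filter p)
  refine List.pairwise_filter.mpr (List.pairwise_ofFn.mpr fun i j hij hi hj => ?_)
  exact (hτ.lt_iff_lt hi hj).mp (by simpa using hij)

theorem strictMonoOn_of_apply_le_add_one (τ : Perm (Fin n)) (h : ∀ i, (τ i : ℕ) ≤ i + 1) :
    StrictMonoOn τ {i | τ i ≤ i} := by
  -- `τ k ≤ k + 1 ≤ m` for `k < m`, so `τ` maps `Iic m` into, hence onto, itself.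
  have image_Iic : ∀ m, τ m ≤ m → τ '' Set.Iic m = Set.Iic m := fun m hm =>
    Set.map_eq_of_subset (f := τ.toEmbedding) <| Set.image_subset_iff.mpr fun k hk => by
      rcases (Set.mem_Iic.mp hk).lt_or_eq with hk | rfl
      · exact Fin.le_def.mpr ((h k).trans (Fin.lt_def.mp hk))
      · exact hm
  intro a ha b hb hab
  by_contra hba
  have : τ b ∈ τ '' Set.Iic a := (image_Iic a ha).symm ▸ ((not_lt.mp hba).trans ha)
  obtain ⟨k, hk, hkb⟩ := this
  exact absurd (τ.injective hkb ▸ hk : b ≤ a) (not_le.mpr hab)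

end Equiv.Perm

theorem Matrix.prod_ofFn_col_eq_prod_ofFn_row_of_hessenberg {R : Type*} [MonoidWithZero R]
    {n : ℕ} {A : Matrix (Fin n) (Fin n) R}
    (hA : ∀ i j : Fin n, (i : ℕ) + 1 < j → A i j = 0)
    (hcentral : ∀ i j : Fin n, (j : ℕ) = i + 1 → ∀ x : R, A i j * x = x * A i j)
    (τ : Equiv.Perm (Fin n)) :
    (List.ofFn fun j => A (τ⁻¹ j) j).prod = (List.ofFn fun i => A i (τ i)).prod := by
  by_cases hτ : ∀ i, (τ i : ℕ) ≤ i + 1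
  · have hcol : (List.ofFn fun j => A (τ⁻¹ j) j) = (List.ofFn ⇑τ⁻¹).map fun i => A i (τ i) := by
      simp [List.map_ofFn, Function.comp_def]
    have hperm : (List.ofFn ⇑τ⁻¹).Perm (List.finRange n) := τ⁻¹.ofFn_comp_perm id
    rw [hcol, List.ofFn_eq_map (f := fun i => A i (τ i))]
    refine hperm.prod_map_eq_of_filter_eq
      (g := fun i => A i (τ i)) (p := fun i => τ i ≤ i) ?_
      (τ.filter_ofFn_inv_eq_filter_finRange _ ?_)
    · intro i hi
      refine Submonoid.mem_center_iff.mpr fun x => (hcentral i (τ i) ?_ x).symm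
      have := hτ i
      simp only [decide_eq_false_iff_not, not_le, Fin.lt_def] at hi
      omega
    · simpa using τ.strictMonoOn_of_apply_le_add_one hτ
  · obtain ⟨i, hi⟩ := not_forall.mp hτ
    have hzero : A i (τ i) = 0 := hA i (τ i) (not_le.mp hi)
    rw [List.prod_eq_zero (List.mem_ofFn.mpr ⟨τ i, by simpa using hzero⟩),
      List.prod_eq_zero (List.mem_ofFn.mpr ⟨i, hzero⟩)]

/-- for an `n×n` matrix `A` over a (possibly noncommutative) ring with
`A_{ij} = 0` for `j > i+1` and central superdiagonal entries `A_{i,i+1}`, the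
column-determinant equals the row-determinant:
`Σ_σ sgn(σ)·A_{σ(1)1}⋯A_{σ(n)n} = Σ_σ sgn(σ)·A_{1σ(1)}⋯A_{nσ(n)}`. -/
theorem cdet_eq_rdet_hessenberg
    {R : Type*} [Ring R] (n : ℕ)
    (A : Matrix (Fin n) (Fin n) R)
    (hA : ∀ i j : Fin n, (i : ℕ) + 1 < (j : ℕ) → A i j = 0)
    (hcentral : ∀ i j : Fin n, (j : ℕ) = (i : ℕ) + 1 → ∀ x : R, A i j * x = x * A i j) :
    (∑ σ : Equiv.Perm (Fin n),
        (Equiv.Perm.sign σ : ℤ) • (List.ofFn fun j : Fin n => A (σ j) j).prod)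
      = ∑ σ : Equiv.Perm (Fin n),
          (Equiv.Perm.sign σ : ℤ) • (List.ofFn fun i : Fin n => A i (σ i)).prod := by
  rw [← Equiv.sum_comp (Equiv.inv (Equiv.Perm (Fin n)))]
  refine Finset.sum_congr rfl fun τ _ => ?_
  rw [Equiv.inv_apply, Equiv.Perm.sign_inv,
    Matrix.prod_ofFn_col_eq_prod_ofFn_row_of_hessenberg hA hcentral]
end
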